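/- arXiv:1905.05033 — 5 statements merged into one kernel-verified Lean document; each statement's English description precedes it below -/
import Mathlib

section
/- For every integer n ≥ 1, the digraph G(*n) of single-heap nim has exactly n+1 vertices and n(n+1)/2 arcs, and its metric dimension with respect to signed distance satisfies β(G(*n)) = ⌈n/2⌉. -/
/-- `StepsTo R m u v` : there is a directed walk of length `m` from `u` to `v`. -/
def StepsTo {V : Type*} (R : V → V → Prop) : ℕ → V → V → Prop
  | 0 => fun u v => u = v
  | (m + 1) => fun u v => ∃ w, R u w ∧ StepsTo R m w v

/-- Directed distance: length of a shortest directed path (`⊤` = ∞ if none exists). -/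
noncomputable def ddist {V : Type*} (R : V → V → Prop) (u v : V) : ℕ∞ :=
  sInf ((fun m : ℕ => (m : ℕ∞)) '' {m : ℕ | StepsTo R m u v})

/-- Signed distance `d±(u,v)`: `d(u,v)` if a `u→v` path exists and `d(u,v) ≤ d(v,u)`;
`-d(v,u)` if a `v→u` path exists and `d(v,u) < d(u,v)`; `⊤` if neither path exists. -/
noncomputable def sdist {V : Type*} (R : V → V → Prop) (u v : V) : WithTop ℤ :=
  if ddist R u v ≤ ddist R v u then (ddist R u v).map (fun m : ℕ => (m : ℤ))
  else (ddist R v u).map (fun m : ℕ => (-(m : ℤ)))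

/-- `S` resolves the digraph with arc relation `R` (w.r.t. signed distance). -/
def Resolves {V : Type*} (R : V → V → Prop) (S : Set V) : Prop :=
  ∀ u v : V, (∀ s ∈ S, sdist R s u = sdist R s v) → u = v

/-- Metric dimension of the digraph with arc relation `R` (w.r.t. signed distance). -/
noncomputable def metricDim {V : Type*} (R : V → V → Prop) : ℕ :=
  sInf {k : ℕ | ∃ S : Finset V, S.card = k ∧ Resolves R ↑S}

/-- The digraph `G(*n)` of single-heap nim: vertices `{0,…,n}`, arc `i → j` iff `j < i`. -/
def nimR (n : ℕ) : Fin (n + 1) → Fin (n + 1) → Prop := fun i j => (j : ℕ) < (i : ℕ)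

lemma stepsTo_le {n m : ℕ} {u v : Fin (n+1)} (h : StepsTo (nimR n) m u v) : (v:ℕ) ≤ u := by
  induction m generalizing u with
  | zero => exact le_of_eq (congrArg Fin.val h.symm)
  | succ k ih => obtain ⟨w, hw, hs⟩ := h; exact le_trans (ih hs) (le_of_lt hw)

lemma ddist_nim (n : ℕ) (u v : Fin (n+1)) :
    ddist (nimR n) u v = if u = v then 0 else if (v:ℕ) < u then 1 else ⊤ := by
  unfold ddist
  split_ifs with h1 h2
  · subst h1
    refine le_antisymm ?_ (zero_le)
    exact sInf_le ⟨0, rfl, rfl⟩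
  · refine le_antisymm (sInf_le ⟨1, ⟨v, h2, rfl⟩, rfl⟩) ?_
    refine le_sInf ?_
    rintro x ⟨m, hm, rfl⟩
    cases m with
    | zero => exact absurd hm h1
    | succ k => show (1:ℕ∞) ≤ ((k+1 : ℕ) : ℕ∞); exact_mod_cast Nat.succ_le_succ (Nat.zero_le k)
  · rw [show ((fun m : ℕ => (m : ℕ∞)) '' {m : ℕ | StepsTo (nimR n) m u v}) = ∅ from ?_]; exact sInf_empty
    rw [Set.image_eq_empty, Set.eq_empty_iff_forall_notMem]
    intro m hm
    have := stepsTo_le hm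
    have : (u:ℕ) ≠ v := fun h => h1 (Fin.ext h)
    omega

lemma sdist_nim (n : ℕ) (s u : Fin (n+1)) :
    sdist (nimR n) s u =
      if s = u then (0 : WithTop ℤ) else if (u:ℕ) < s then 1 else -1 := by
  unfold sdist
  rw [ddist_nim, ddist_nim]
  rcases lt_trichotomy (u:ℕ) (s:ℕ) with h | h | h
  · have h1 : s ≠ u := fun he => by omega
    have h2 : u ≠ s := fun he => by omega
    have h3 : ¬ (s:ℕ) < u := by omega
    simp [h1, h2, h, h3]
  · have h1 : s = u := Fin.ext h.symm
    simp [h1]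
  · have h1 : s ≠ u := fun he => by omega
    have h2 : u ≠ s := fun he => by omega
    have h3 : ¬ (u:ℕ) < s := by omega
    simp [h1, h2, h, h3]

def oddSet (n : ℕ) : Finset (Fin (n+1)) :=
  Finset.image (fun j : Fin ((n+1)/2) =>
    (⟨2*(j:ℕ)+1, by have := j.isLt; omega⟩ : Fin (n+1))) Finset.univ

lemma oddSet_card (n : ℕ) : (oddSet n).card = (n+1)/2 := by
  rw [oddSet, Finset.card_image_of_injective _ ?_, Finset.card_univ, Fintype.card_fin]
  intro a b hab
  have : 2*(a:ℕ)+1 = 2*(b:ℕ)+1 := congrArg Fin.val hab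
  exact Fin.ext (by omega)

lemma mem_oddSet {n : ℕ} {s : Fin (n+1)} (h : (s:ℕ) % 2 = 1) : s ∈ oddSet n := by
  have hlt : (s:ℕ) < n+1 := s.isLt
  refine Finset.mem_image.mpr ⟨⟨(s:ℕ)/2, by omega⟩, Finset.mem_univ _, ?_⟩
  exact Fin.ext (by simp; omega)

lemma oddSet_resolves (n : ℕ) : Resolves (nimR n) ↑(oddSet n) := by
  have key : ∀ u v : Fin (n+1), (u:ℕ) < (v:ℕ) →
      ∃ s ∈ oddSet n, sdist (nimR n) s u ≠ sdist (nimR n) s v := by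
    intro u v huv
    by_cases hpar : (u:ℕ) % 2 = 1
    · refine ⟨u, mem_oddSet hpar, ?_⟩
      rw [sdist_nim, sdist_nim]
      have h1 : u ≠ v := fun he => by have := congrArg Fin.val he; omega
      have h2 : ¬ (v:ℕ) < (u:ℕ) := by omega
      simp [h1, h2]
    · have hv : (v:ℕ) < n+1 := v.isLt
      have hb : (u:ℕ)+1 < n+1 := by omega
      set s : Fin (n+1) := ⟨(u:ℕ)+1, hb⟩ with hs
      have hmem : s ∈ oddSet n := mem_oddSet (by simp [hs]; omega)
      refine ⟨s, hmem, ?_⟩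
      rw [sdist_nim, sdist_nim]
      have h1 : s ≠ u := fun he => by have := congrArg Fin.val he; simp [hs] at this
      have h2 : (u:ℕ) < (s:ℕ) := by simp [hs]
      have h3 : ¬ (v:ℕ) < (s:ℕ) := by simp [hs]; omega
      simp [h1, h2, h3]
      by_cases h4 : s = v
      · simp [h4]
      · simp [h4]; decide
  intro u v hsame
  by_contra hne
  rcases lt_trichotomy (u:ℕ) (v:ℕ) with h | h | h
  · obtain ⟨s, hm, hne'⟩ := key u v h
    exact hne' (hsame s hm)
  · exact hne (Fin.ext h)
  · obtain ⟨s, hm, hne'⟩ := key v u h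
    exact hne' (hsame s hm).symm

lemma resolves_card_lb {n : ℕ} (S : Finset (Fin (n+1))) (hres : Resolves (nimR n) ↑S) :
    (n+1)/2 ≤ S.card := by
  have H : ∀ j : Fin ((n+1)/2), ∃ s, s ∈ S ∧ ((s:ℕ) = 2*(j:ℕ) ∨ (s:ℕ) = 2*(j:ℕ)+1) := by
    intro j
    have hj := j.isLt
    have hb1 : 2*(j:ℕ) < n+1 := by omega
    have hb2 : 2*(j:ℕ)+1 < n+1 := by omega
    set u : Fin (n+1) := ⟨2*(j:ℕ), hb1⟩
    set v : Fin (n+1) := ⟨2*(j:ℕ)+1, hb2⟩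
    have hne : u ≠ v := fun he => by have := congrArg Fin.val he; simp [u, v] at this
    have : ¬ (∀ s ∈ (↑S : Set (Fin (n+1))), sdist (nimR n) s u = sdist (nimR n) s v) :=
      fun h => hne (hres u v h)
    push_neg at this
    obtain ⟨s, hsS, hsne⟩ := this
    refine ⟨s, hsS, ?_⟩
    by_contra hcon
    push_neg at hcon
    apply hsne
    rw [sdist_nim, sdist_nim]
    rcases Nat.lt_or_ge (s:ℕ) (2*(j:ℕ)) with hlt | hge
    · have h1 : s ≠ u := fun he => by have := congrArg Fin.val he; simp [u] at this; omega
      have h2 : s ≠ v := fun he => by have := congrArg Fin.val he; simp [v] at this; omega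
      have h3 : ¬ (u:ℕ) < (s:ℕ) := by simp [u]; omega
      have h4 : ¬ (v:ℕ) < (s:ℕ) := by simp [v]; omega
      simp [h1, h2, h3, h4]
    · have hgt : 2*(j:ℕ)+1 < (s:ℕ) := by omega
      have h1 : s ≠ u := fun he => by have := congrArg Fin.val he; simp [u] at this; omega
      have h2 : s ≠ v := fun he => by have := congrArg Fin.val he; simp [v] at this; omega
      have h3 : (u:ℕ) < (s:ℕ) := by simp [u]; omega
      have h4 : (v:ℕ) < (s:ℕ) := by simp [v]; omega
      simp [h1, h2, h3, h4]
  choose f hf1 hf2 using H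
  have hinj : Function.Injective f := by
    intro a b hab
    have h1 := hf2 a
    have h2 := hf2 b
    rw [hab] at h1
    exact Fin.ext (by omega)
  calc (n+1)/2 = (Finset.univ : Finset (Fin ((n+1)/2))).card := by
        rw [Finset.card_univ, Fintype.card_fin]
    _ ≤ S.card := Finset.card_le_card_of_injOn f (fun j _ => hf1 j) (hinj.injOn)

lemma arc_count (n : ℕ) :
    Nat.card {p : Fin (n + 1) × Fin (n + 1) // nimR n p.1 p.2} = n * (n + 1) / 2 := by
  have e : {p : Fin (n + 1) × Fin (n + 1) // nimR n p.1 p.2} ≃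
      (Σ i : Fin (n+1), Fin (i:ℕ)) :=
    { toFun := fun p => ⟨p.1.1, ⟨(p.1.2 : ℕ), p.2⟩⟩
      invFun := fun x => ⟨(x.1, ⟨(x.2:ℕ), lt_trans x.2.isLt x.1.isLt⟩), x.2.isLt⟩
      left_inv := by rintro ⟨⟨a, b⟩, h⟩; rfl
      right_inv := by rintro ⟨i, j⟩; rfl }
  rw [Nat.card_congr e, Nat.card_eq_fintype_card, Fintype.card_sigma]
  simp only [Fintype.card_fin]
  rw [Fin.sum_univ_eq_sum_range (fun i => i), Finset.sum_range_id]
  cases n with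
  | zero => rfl
  | succ m => simp [Nat.succ_sub_one]; ring_nf

/-- for every `n ≥ 1`, `G(*n)` has `n+1` vertices, `n(n+1)/2` arcs, and
metric dimension `⌈n/2⌉` with respect to signed distance. -/
theorem stmt0 (n : ℕ) (hn : 1 ≤ n) :
    Nat.card (Fin (n + 1)) = n + 1 ∧
    Nat.card {p : Fin (n + 1) × Fin (n + 1) // nimR n p.1 p.2} = n * (n + 1) / 2 ∧
    metricDim (nimR n) = (n + 1) / 2 := by
  refine ⟨by simp, arc_count n, ?_⟩
  have hmem : (n+1)/2 ∈ {k : ℕ | ∃ S : Finset (Fin (n+1)), S.card = k ∧ Resolves (nimR n) ↑S} :=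
    ⟨oddSet n, oddSet_card n, oddSet_resolves n⟩
  refine le_antisymm (Nat.sInf_le hmem) ?_
  refine le_csInf ⟨_, hmem⟩ ?_
  rintro k ⟨S, rfl, hres⟩
  exact resolves_card_lb S hres
end

section
/- For every integer n ≥ 1, the metric dimension of the two-heap nim digraph G(n,n) with respect to signed distance is β(G(n,n)) = ⌈n/2⌉. -/
/-- A nim move on a multiset of heaps: strictly decrease exactly one entry. -/
def NimMove (s t : Multiset ℕ) : Prop :=
  ∃ a ∈ s, ∃ b : ℕ, b < a ∧ t = b ::ₘ s.erase a

/-- Vertices of `G(n,n)`: multisets `{x,y}` with `0 ≤ x ≤ y ≤ n`. -/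
def NimV (n : ℕ) : Type := {s : Multiset ℕ // Multiset.card s = 2 ∧ ∀ x ∈ s, x ≤ n}

/-- The arc relation of the two-heap nim digraph `G(n,n)`. -/
def nim2R (n : ℕ) (u v : NimV n) : Prop := NimMove u.1 v.1


lemma pair_eq_pair' (a b c d : ℕ) : ({a,b} : Multiset ℕ) = {c,d} ↔ a=c∧b=d ∨ a=d∧b=c := by
  constructor
  · intro h
    rw [show ({a,b}:Multiset ℕ) = a ::ₘ {b} from rfl, show ({c,d}:Multiset ℕ) = c ::ₘ {d} from rfl,
      Multiset.cons_eq_cons] at h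
    rcases h with ⟨h1, h2⟩ | ⟨h1, cs, h2, h3⟩
    · exact Or.inl ⟨h1, Multiset.singleton_inj.mp h2⟩
    · rw [Multiset.singleton_eq_cons_iff] at h2
      obtain ⟨rfl, rfl⟩ := h2
      rw [Multiset.singleton_eq_cons_iff] at h3
      exact Or.inr ⟨h3.1.symm, rfl⟩
  · rintro (⟨rfl, rfl⟩ | ⟨rfl, rfl⟩)
    · rfl
    · exact Multiset.pair_comm a b

lemma erase_pair_left (p q : ℕ) : ({p,q} : Multiset ℕ).erase p = {q} :=
  Multiset.erase_cons_head p {q}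

lemma erase_pair_right (p q : ℕ) : ({p,q} : Multiset ℕ).erase q = {p} := by
  by_cases h : p = q
  · subst h; exact Multiset.erase_cons_head p {p}
  · rw [show ({p,q} : Multiset ℕ) = p ::ₘ {q} from rfl,
      Multiset.erase_cons_tail _ h, Multiset.erase_singleton]
    rfl

lemma move_iff (p q : ℕ) (t : Multiset ℕ) :
    NimMove {p,q} t ↔ (∃ c < p, t = {c, q}) ∨ (∃ c < q, t = {p, c}) := by
  unfold NimMove
  constructor
  · rintro ⟨a, ha, b, hb, rfl⟩
    simp only [Multiset.insert_eq_cons, Multiset.mem_cons, Multiset.mem_singleton] at ha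
    rcases ha with rfl | rfl
    · exact Or.inl ⟨b, hb, by rw [erase_pair_left, Multiset.insert_eq_cons]⟩
    · exact Or.inr ⟨b, hb, by rw [erase_pair_right]; exact Multiset.pair_comm b p⟩
  · rintro (⟨c, hc, rfl⟩ | ⟨c, hc, rfl⟩)
    · exact ⟨p, by simp, c, hc, by rw [erase_pair_left, Multiset.insert_eq_cons]⟩
    · exact ⟨q, by simp, c, hc, by rw [erase_pair_right]; exact Multiset.pair_comm p c⟩

lemma move_sorted {p q a b : ℕ} (hpq : p ≤ q) (hab : a ≤ b) :
    NimMove {p,q} {a,b} ↔ (a<p ∧ b=q) ∨ (a=p ∧ b<q) ∨ (a<q ∧ b=p) := by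
  rw [move_iff]
  constructor
  · rintro (⟨c, hc, h⟩ | ⟨c, hc, h⟩) <;> rw [pair_eq_pair'] at h <;> omega
  · rintro (⟨h1, rfl⟩ | ⟨rfl, h2⟩ | ⟨h1, rfl⟩)
    · exact Or.inl ⟨a, h1, rfl⟩
    · exact Or.inr ⟨b, h2, rfl⟩
    · exact Or.inr ⟨a, h1, (Multiset.pair_comm a b)⟩

section ddist
variable {V : Type*} {R : V → V → Prop} {u v : V}

lemma stepsTo_one : StepsTo R 1 u v ↔ R u v := by
  simp [StepsTo]

lemma ddist_self (u : V) : ddist R u u = 0 :=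
  le_antisymm (sInf_le ⟨0, rfl, rfl⟩) (zero_le)

lemma ddist_eq_one (h1 : R u v) (h0 : u ≠ v) : ddist R u v = 1 := by
  refine le_antisymm (sInf_le ⟨1, stepsTo_one.mpr h1, rfl⟩) (le_sInf ?_)
  rintro x ⟨m, hm, rfl⟩
  match m with
  | 0 => exact absurd hm h0
  | (k+1) => show (1:ℕ∞) ≤ ((k+1:ℕ):ℕ∞); exact_mod_cast Nat.le_add_left 1 k

lemma ddist_eq_two (h2 : StepsTo R 2 u v) (h0 : u ≠ v) (h1 : ¬ R u v) :
    ddist R u v = 2 := by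
  refine le_antisymm (sInf_le ⟨2, h2, rfl⟩) (le_sInf ?_)
  rintro x ⟨m, hm, rfl⟩
  match m with
  | 0 => exact absurd hm h0
  | 1 => exact absurd (stepsTo_one.mp hm) h1
  | (k+2) => show (2:ℕ∞) ≤ ((k+2:ℕ):ℕ∞); exact_mod_cast Nat.le_add_left 2 k

lemma ddist_eq_top (h : ∀ m, ¬ StepsTo R m u v) : ddist R u v = ⊤ := by
  have : {m : ℕ | StepsTo R m u v} = ∅ := Set.eq_empty_of_forall_notMem h
  rw [ddist, this]
  simp

end ddist

variable {n : ℕ}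

lemma exists_rep (u : NimV n) : ∃ a b, a ≤ b ∧ b ≤ n ∧ u.1 = {a, b} := by
  obtain ⟨x, y, hxy⟩ := Multiset.card_eq_two.mp u.2.1
  rcases le_total x y with h | h
  · exact ⟨x, y, h, u.2.2 y (by rw [hxy]; simp), hxy⟩
  · exact ⟨y, x, h, u.2.2 x (by rw [hxy]; simp), by rw [hxy]; exact Multiset.pair_comm x y⟩

/-- Make a vertex from two entries ≤ n. -/
def mkV (n a b : ℕ) (ha : a ≤ n) (hb : b ≤ n) : NimV n :=
  ⟨{a, b}, rfl, by
    intro x hx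
    simp only [Multiset.insert_eq_cons, Multiset.mem_cons, Multiset.mem_singleton] at hx
    rcases hx with rfl | rfl <;> assumption⟩

lemma reach_dom : ∀ (m : ℕ) (s u : NimV n) (p q a b : ℕ), p ≤ q → a ≤ b →
    s.1 = {p, q} → u.1 = {a, b} → StepsTo (nim2R n) m s u →
    (p = a ∧ q = b) ∨ (a ≤ p ∧ b ≤ q ∧ a + b < p + q) := by
  intro m
  induction m with
  | zero =>
    rintro s u p q a b hpq hab hs hu rfl
    have : ({p,q} : Multiset ℕ) = {a,b} := hs ▸ hu
    rw [pair_eq_pair'] at this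
    omega
  | succ k ih =>
    rintro s u p q a b hpq hab hs hu ⟨w, hw, hsteps⟩
    obtain ⟨x, y, hxy, hyn, hwrep⟩ := exists_rep w
    have hmv : NimMove s.1 w.1 := hw
    rw [hs, hwrep, move_sorted hpq hxy] at hmv
    rcases ih w u x y a b hxy hab hwrep hu hsteps with h | h <;> omega

lemma ne_of_reps {s u : NimV n} {p q a b : ℕ} (hpq : p ≤ q) (hab : a ≤ b)
    (hs : s.1 = {p, q}) (hu : u.1 = {a, b}) (h : ¬(p = a ∧ q = b)) : s ≠ u := by
  intro he
  rw [he, hu, pair_eq_pair'] at hs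
  omega

lemma ddist_eval (s u : NimV n) (p q a b : ℕ) (hpq : p ≤ q) (hab : a ≤ b)
    (hs : s.1 = {p, q}) (hu : u.1 = {a, b}) :
    ddist (nim2R n) s u =
      if p = a ∧ q = b then 0
      else if a ≤ p ∧ b ≤ q then
        (if (a < p ∧ b = q) ∨ (a = p ∧ b < q) ∨ (a < q ∧ b = p) then 1 else 2)
      else ⊤ := by
  split_ifs with h1 h2 h3
  · obtain ⟨rfl, rfl⟩ := h1
    have : s = u := Subtype.ext (hs.trans hu.symm)
    rw [this, ddist_self]
  · -- one move
    refine ddist_eq_one ?_ (ne_of_reps hpq hab hs hu h1)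
    show NimMove s.1 u.1
    rw [hs, hu, move_sorted hpq hab]; exact h3
  · -- two moves
    have hpn : p ≤ n := s.2.2 p (by rw [hs]; simp)
    have hbn : b ≤ n := u.2.2 b (by rw [hu]; simp)
    have hap : a < p := by omega
    have hbq : b < q := by omega
    refine ddist_eq_two ?_ (ne_of_reps hpq hab hs hu h1) ?_
    · refine ⟨mkV n p b hpn hbn, ?_, ?_⟩
      · show NimMove s.1 _
        rw [hs]
        rw [move_iff]
        exact Or.inr ⟨b, hbq, rfl⟩
      · refine stepsTo_one.mpr ?_
        show NimMove ({p, b} : Multiset ℕ) u.1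
        rw [hu, move_iff]
        exact Or.inl ⟨a, hap, rfl⟩
    · intro hmv
      have : NimMove s.1 u.1 := hmv
      rw [hs, hu, move_sorted hpq hab] at this
      exact h3 this
  · refine ddist_eq_top ?_
    intro m hm
    rcases reach_dom m s u p q a b hpq hab hs hu hm with h | h <;> omega

lemma sdist_eval (s u : NimV n) (p q a b : ℕ) (hpq : p ≤ q) (hab : a ≤ b)
    (hs : s.1 = {p, q}) (hu : u.1 = {a, b}) :
    sdist (nim2R n) s u =
      if p = a ∧ q = b then (0 : WithTop ℤ)
      else if a ≤ p ∧ b ≤ q then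
        (if (a < p ∧ b = q) ∨ (a = p ∧ b < q) ∨ (a < q ∧ b = p) then ((1:ℤ):WithTop ℤ)
         else ((2:ℤ):WithTop ℤ))
      else if p ≤ a ∧ q ≤ b then
        (if (p < a ∧ q = b) ∨ (p = a ∧ q < b) ∨ (p < b ∧ q = a) then ((-1:ℤ):WithTop ℤ)
         else ((-2:ℤ):WithTop ℤ))
      else ⊤ := by
  have hd1 := ddist_eval s u p q a b hpq hab hs hu
  have hd2 := ddist_eval u s a b p q hab hpq hu hs
  by_cases h1 : p = a ∧ q = b
  · have e1 : ddist (nim2R n) s u = 0 := by rw [hd1, if_pos h1]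
    have e2 : ddist (nim2R n) u s = 0 := by rw [hd2, if_pos ⟨h1.1.symm, h1.2.symm⟩]
    rw [sdist, e1, e2, if_pos le_rfl, if_pos h1]
    decide
  · by_cases h2 : a ≤ p ∧ b ≤ q
    · have e2 : ddist (nim2R n) u s = ⊤ := by
        rw [hd2, if_neg (by omega), if_neg (by omega)]
      have e1 : ddist (nim2R n) s u =
          (if (a < p ∧ b = q) ∨ (a = p ∧ b < q) ∨ (a < q ∧ b = p) then (1:ℕ∞) else 2) := by
        rw [hd1, if_neg h1, if_pos h2]
      rw [sdist, e1, e2, if_neg h1, if_pos h2]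
      by_cases hD : (a < p ∧ b = q) ∨ (a = p ∧ b < q) ∨ (a < q ∧ b = p)
      · rw [if_pos hD, if_pos hD, if_pos le_top]
        decide
      · rw [if_neg hD, if_neg hD, if_pos le_top]
        decide
    · by_cases h3 : p ≤ a ∧ q ≤ b
      · have e1 : ddist (nim2R n) s u = ⊤ := by
          rw [hd1, if_neg h1, if_neg h2]
        have e2 : ddist (nim2R n) u s =
            (if (p < a ∧ q = b) ∨ (p = a ∧ q < b) ∨ (p < b ∧ q = a) then (1:ℕ∞) else 2) := by
          rw [hd2, if_neg (by omega), if_pos h3]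
        rw [sdist, e1, e2, if_neg h1, if_neg h2, if_pos h3]
        by_cases hD : (p < a ∧ q = b) ∨ (p = a ∧ q < b) ∨ (p < b ∧ q = a)
        · rw [if_pos hD, if_pos hD, if_neg (by decide)]
          decide
        · rw [if_neg hD, if_neg hD, if_neg (by decide)]
          decide
      · have e1 : ddist (nim2R n) s u = ⊤ := by rw [hd1, if_neg h1, if_neg h2]
        have e2 : ddist (nim2R n) u s = ⊤ := by
          rw [hd2, if_neg (by omega), if_neg (by omega)]
        rw [sdist, e1, e2, if_neg h1, if_neg h2, if_neg h3, if_pos le_rfl]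
        decide

def diagV (n p : ℕ) (hp : p ≤ n) : NimV n := mkV n p p hp hp

lemma diag_sep {p a b c d : ℕ} (hp : p ≤ n) (hab : a ≤ b) (hcd : c ≤ d)
    {u v : NimV n} (hu : u.1 = {a, b}) (hv : v.1 = {c, d})
    (h : sdist (nim2R n) (diagV n p hp) u = sdist (nim2R n) (diagV n p hp) v) :
    (a < p ↔ c < p) ∧ (a = p ↔ c = p) ∧ (b < p ↔ d < p) ∧ (b = p ↔ d = p) := by
  rw [sdist_eval (diagV n p hp) u p p a b le_rfl hab rfl hu,
    sdist_eval (diagV n p hp) v p p c d le_rfl hcd rfl hv] at h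
  split_ifs at h <;> first | omega | exact absurd h (by decide)

lemma key_inj (hn : 1 ≤ n) : ∀ x y : ℕ, x ≤ n → y ≤ n →
    (∀ j, j < (n+1)/2 → ((x < n-1-2*j ↔ y < n-1-2*j) ∧ (x = n-1-2*j ↔ y = n-1-2*j))) →
    x = y := by
  have asym : ∀ x y : ℕ, x < y → y ≤ n →
      (∀ j, j < (n+1)/2 → ((x < n-1-2*j ↔ y < n-1-2*j) ∧ (x = n-1-2*j ↔ y = n-1-2*j))) →
      False := by
    intro x y hxy hyn hiff
    have A := hiff ((n-1-y)/2) (by omega)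
    have B := hiff ((n-y)/2) (by omega)
    omega
  intro x y hxn hyn hiff
  rcases lt_trichotomy x y with h | h | h
  · exact absurd (asym x y h hyn hiff) not_false
  · exact h
  · exact absurd (asym y x h hxn (fun j hj => ⟨(hiff j hj).1.symm, (hiff j hj).2.symm⟩))
      not_false

instance : DecidableEq (NimV n) := by unfold NimV; infer_instance

def diagSet (n : ℕ) : Finset (NimV n) :=
  (Finset.range ((n+1)/2)).image (fun j => diagV n (n-1-2*j) (by omega))

lemma diagSet_card (hn : 1 ≤ n) : (diagSet n).card = (n+1)/2 := by
  rw [diagSet, Finset.card_image_of_injOn, Finset.card_range]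
  intro j hj j' hj' he
  simp only [Finset.coe_range, Set.mem_Iio] at hj hj'
  have : ({n-1-2*j, n-1-2*j} : Multiset ℕ) = {n-1-2*j', n-1-2*j'} :=
    congrArg Subtype.val he
  rw [pair_eq_pair'] at this
  omega

lemma diagSet_resolves (hn : 1 ≤ n) : Resolves (nim2R n) (diagSet n : Set (NimV n)) := by
  intro u v h
  obtain ⟨a, b, hab, hbn, hu⟩ := exists_rep u
  obtain ⟨c, d, hcd, hdn, hv⟩ := exists_rep v
  have H : ∀ j, j < (n+1)/2 →
      (a < n-1-2*j ↔ c < n-1-2*j) ∧ (a = n-1-2*j ↔ c = n-1-2*j) ∧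
      (b < n-1-2*j ↔ d < n-1-2*j) ∧ (b = n-1-2*j ↔ d = n-1-2*j) := by
    intro j hj
    refine diag_sep (by omega) hab hcd hu hv ?_
    exact h _ (Finset.mem_image_of_mem _ (Finset.mem_range.mpr hj))
  have ha : a = c := key_inj hn a c (le_trans hab hbn) (le_trans hcd hdn)
    (fun j hj => ⟨(H j hj).1, (H j hj).2.1⟩)
  have hb : b = d := key_inj hn b d hbn hdn
    (fun j hj => ⟨(H j hj).2.2.1, (H j hj).2.2.2⟩)
  apply Subtype.ext
  rw [hu, hv, ha, hb]

lemma unsep (i : ℕ) (hi : i < n) (s : NimV n) (p q : ℕ) (hpq : p ≤ q)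
    (hs : s.1 = {p, q}) (h1 : p ≠ i+1) (h2 : q ≠ i+1) (h3 : ¬(p = i ∧ q = i)) :
    sdist (nim2R n) s (mkV n i i (by omega) (by omega)) =
      sdist (nim2R n) s (mkV n i (i+1) (by omega) (by omega)) := by
  rw [sdist_eval s _ p q i i hpq le_rfl hs rfl,
    sdist_eval s _ p q i (i+1) hpq (by omega) hs rfl]
  split_ifs <;> first | rfl | (exfalso; omega)

lemma cond_arith (p q k : ℕ) :
    ((k ∈ ({p,q} : Multiset ℕ) ∧ ∀ x ∈ ({p,q} : Multiset ℕ), x ≤ k) ↔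
      ((k = p ∨ k = q) ∧ p ≤ k ∧ q ≤ k)) := by
  simp [Multiset.insert_eq_cons]

lemma lower_count (hn : 1 ≤ n) (S : Finset (NimV n))
    (hres : Resolves (nim2R n) (S : Set (NimV n))) : n ≤ 2 * S.card := by
  classical
  have hex : ∀ i (hi : i < n), ∃ s ∈ S,
      sdist (nim2R n) s (mkV n i i (by omega) (by omega)) ≠
        sdist (nim2R n) s (mkV n i (i+1) (by omega) (by omega)) := by
    intro i hi
    by_contra hc
    push_neg at hc
    have := hres _ _ hc
    have h2 : ({i, i} : Multiset ℕ) = {i, i+1} := congrArg Subtype.val this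
    rw [pair_eq_pair'] at h2
    omega
  choose f hf1 hf2 using hex
  have hcard : (Finset.range n).card ≤ (S ×ˢ (Finset.univ : Finset Bool)).card := by
    apply Finset.card_le_card_of_injOn
      (fun i => if hi : i < n then
        (f i hi, if (i+1 ∈ (f i hi).1 ∧ ∀ x ∈ (f i hi).1, x ≤ i+1) then true else false)
        else (mkV n 0 0 (by omega) (by omega), true))
    · intro i hi
      have hi : i < n := by simpa using hi
      simp only [dif_pos hi]
      exact Finset.mem_product.mpr ⟨hf1 i hi, Finset.mem_univ _⟩
    · intro i hi j hj he
      have hi : i < n := by simpa using hi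
      have hj : j < n := by simpa using hj
      simp only [dif_pos hi, dif_pos hj, Prod.mk.injEq] at he
      obtain ⟨he1, he2⟩ := he
      rw [← he1] at he2
      set s := f i hi with hsdef
      obtain ⟨p, q, hpq, hqn, hs⟩ := exists_rep s
      have Di : p = i+1 ∨ q = i+1 ∨ (p = i ∧ q = i) := by
        by_contra hD
        push_neg at hD
        exact (hf2 i hi) (unsep i hi s p q hpq hs hD.1 hD.2.1 (fun hh => hD.2.2 hh.1 hh.2))
      have Dj : p = j+1 ∨ q = j+1 ∨ (p = j ∧ q = j) := by
        by_contra hD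
        push_neg at hD
        have := unsep j hj s p q hpq hs hD.1 hD.2.1 (fun hh => hD.2.2 hh.1 hh.2)
        rw [he1] at this
        exact (hf2 j hj) this
      have hiff : ((i+1) ∈ s.1 ∧ ∀ x ∈ s.1, x ≤ i+1) ↔
          ((j+1) ∈ s.1 ∧ ∀ x ∈ s.1, x ≤ j+1) := by
        by_cases hci : ((i+1) ∈ s.1 ∧ ∀ x ∈ s.1, x ≤ i+1) <;>
          by_cases hcj : ((j+1) ∈ s.1 ∧ ∀ x ∈ s.1, x ≤ j+1)
        · exact iff_of_true hci hcj
        · rw [if_pos hci, if_neg hcj] at he2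
          exact Bool.noConfusion he2
        · rw [if_neg hci, if_pos hcj] at he2
          exact Bool.noConfusion he2
        · exact iff_of_false hci hcj
      rw [hs] at hiff
      rw [cond_arith p q (i+1), cond_arith p q (j+1)] at hiff
      omega
  rw [Finset.card_range, Finset.card_product, Finset.card_univ, Fintype.card_bool] at hcard
  omega

/-- for every `n ≥ 1`, the metric dimension of the two-heap nim digraph
`G(n,n)` with respect to signed distance is `⌈n/2⌉`. -/
theorem stmt4 (n : ℕ) (hn : 1 ≤ n) :
    metricDim (nim2R n) = (n + 1) / 2 := by
  have hmem : (n + 1) / 2 ∈ {k : ℕ | ∃ S : Finset (NimV n), S.card = k ∧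
      Resolves (nim2R n) ↑S} :=
    ⟨diagSet n, diagSet_card hn, diagSet_resolves hn⟩
  refine le_antisymm (Nat.sInf_le hmem) (le_csInf ⟨_, hmem⟩ ?_)
  rintro k ⟨S, rfl, hres⟩
  have := lower_count hn S hres
  omega
end

section
/- The hats-nim game graph G(hats,{1,2}) has metric dimension 1 with respect to signed distance; in particular, the singleton {{1,1}} resolves it. -/
/-- A hats-nim move: pick a heap `h ∈ s` and a subtraction amount `k ∈ s` with `k ≤ h`,
and replace the heap `h` by `h - k`, deleting it if `h - k = 0`. -/
def HatsMove (s t : Multiset ℕ) : Prop :=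
  ∃ h ∈ s, ∃ k ∈ s, k ≤ h ∧
    t = (if k < h then (h - k) ::ₘ s.erase h else s.erase h)

/-- Vertices of `G(hats,{a,b})`: all positions reachable from `{a,b}`. -/
def HatsV (a b : ℕ) : Type :=
  {s : Multiset ℕ // Relation.ReflTransGen HatsMove {a, b} s}

/-- The arc relation of the hats-nim game graph `G(hats,{a,b})`. -/
def hatsR (a b : ℕ) (u v : HatsV a b) : Prop := HatsMove u.1 v.1

section aux
variable {V : Type*} {R : V → V → Prop}

lemma stepsTo_zero {u : V} : StepsTo R 0 u u := rfl

lemma stepsTo_zero_eq {u v : V} (h : StepsTo R 0 u v) : u = v := h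

lemma stepsTo_succ_ex {m : ℕ} {u v : V} (h : StepsTo R (m+1) u v) :
    ∃ w, R u w ∧ StepsTo R m w v := h

lemma stepsTo_rtg {m : ℕ} {u v : V} (h : StepsTo R m u v) : Relation.ReflTransGen R u v := by
  induction m generalizing u with
  | zero => exact stepsTo_zero_eq h ▸ .refl
  | succ m ih =>
    obtain ⟨w, hw, hs⟩ := stepsTo_succ_ex h
    exact .head hw (ih hs)

lemma ddist_le {m : ℕ} {u v : V} (h : StepsTo R m u v) : ddist R u v ≤ m :=
  sInf_le ⟨m, h, rfl⟩

lemma ddist_eq {d : ℕ} {u v : V} (h : StepsTo R d u v)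
    (h2 : ∀ m, StepsTo R m u v → d ≤ m) : ddist R u v = d := by
  refine le_antisymm (ddist_le h) (le_sInf ?_)
  rintro x ⟨m, hm, rfl⟩
  show (d : ℕ∞) ≤ (m : ℕ∞)
  exact_mod_cast h2 m hm

lemma ddist_top {u v : V} (h : ∀ m, ¬ StepsTo R m u v) : ddist R u v = ⊤ := by
  have he : {m : ℕ | StepsTo R m u v} = ∅ := by ext m; simp [h m]
  simp [ddist, he]

end aux

lemma move12 {t : Multiset ℕ} (h : HatsMove {1,2} t) : t = {2} ∨ t = {1,1} ∨ t = {1} := by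
  obtain ⟨a, ha, k, hk, hkh, rfl⟩ := h
  have ha' : a = 1 ∨ a = 2 := by simpa using ha
  have hk' : k = 1 ∨ k = 2 := by simpa using hk
  rcases ha' with rfl | rfl <;> rcases hk' with rfl | rfl <;> decide

lemma move11 {t : Multiset ℕ} (h : HatsMove {1,1} t) : t = {1} := by
  obtain ⟨a, ha, k, hk, hkh, rfl⟩ := h
  have ha' : a = 1 := by simpa using ha
  have hk' : k = 1 := by simpa using hk
  rcases ha' with rfl; rcases hk' with rfl; decide

lemma move2 {t : Multiset ℕ} (h : HatsMove {2} t) : t = 0 := by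
  obtain ⟨a, ha, k, hk, hkh, rfl⟩ := h
  have ha' : a = 2 := by simpa using ha
  have hk' : k = 2 := by simpa using hk
  rcases ha' with rfl; rcases hk' with rfl; decide

lemma move1 {t : Multiset ℕ} (h : HatsMove {1} t) : t = 0 := by
  obtain ⟨a, ha, k, hk, hkh, rfl⟩ := h
  have ha' : a = 1 := by simpa using ha
  have hk' : k = 1 := by simpa using hk
  rcases ha' with rfl; rcases hk' with rfl; decide

lemma move0 {t : Multiset ℕ} (h : HatsMove 0 t) : False := by
  obtain ⟨a, ha, -⟩ := h
  simp at ha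

lemma reach12 {s : Multiset ℕ} (h : Relation.ReflTransGen HatsMove {1,2} s) :
    s = {1,2} ∨ s = {1,1} ∨ s = {2} ∨ s = {1} ∨ s = 0 := by
  induction h with
  | refl => tauto
  | tail hab hbc ih =>
    rcases ih with rfl | rfl | rfl | rfl | rfl
    · rcases move12 hbc with rfl | rfl | rfl <;> tauto
    · rcases move11 hbc with rfl; tauto
    · rcases move2 hbc with rfl; tauto
    · rcases move1 hbc with rfl; tauto
    · exact absurd hbc (fun h => move0 h)

lemma reach11 {s : Multiset ℕ} (h : Relation.ReflTransGen HatsMove {1,1} s) :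
    s = {1,1} ∨ s = {1} ∨ s = 0 := by
  induction h with
  | refl => tauto
  | tail hab hbc ih =>
    rcases ih with rfl | rfl | rfl
    · rcases move11 hbc with rfl; tauto
    · rcases move1 hbc with rfl; tauto
    · exact absurd hbc (fun h => move0 h)

lemma reach2 {s : Multiset ℕ} (h : Relation.ReflTransGen HatsMove {2} s) :
    s = {2} ∨ s = 0 := by
  induction h with
  | refl => tauto
  | tail hab hbc ih =>
    rcases ih with rfl | rfl
    · rcases move2 hbc with rfl; tauto
    · exact absurd hbc (fun h => move0 h)

lemma reach1 {s : Multiset ℕ} (h : Relation.ReflTransGen HatsMove {1} s) :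
    s = {1} ∨ s = 0 := by
  induction h with
  | refl => tauto
  | tail hab hbc ih =>
    rcases ih with rfl | rfl
    · rcases move1 hbc with rfl; tauto
    · exact absurd hbc (fun h => move0 h)

lemma reach0 {s : Multiset ℕ} (h : Relation.ReflTransGen HatsMove 0 s) : s = 0 := by
  induction h with
  | refl => rfl
  | tail hab hbc ih =>
    subst ih
    exact absurd hbc (fun h => move0 h)

-- concrete moves
lemma m12_11 : HatsMove {1,2} {1,1} := ⟨2, by decide, 1, by decide, by decide, by decide⟩
lemma m12_2 : HatsMove {1,2} {2} := ⟨1, by decide, 1, by decide, by decide, by decide⟩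
lemma m12_1 : HatsMove {1,2} {1} := ⟨2, by decide, 2, by decide, by decide, by decide⟩
lemma m11_1 : HatsMove {1,1} {1} := ⟨1, by decide, 1, by decide, by decide, by decide⟩
lemma m1_0 : HatsMove {1} 0 := ⟨1, by decide, 1, by decide, by decide, by decide⟩

def v12 : HatsV 1 2 := ⟨{1,2}, .refl⟩
def v11 : HatsV 1 2 := ⟨{1,1}, .single m12_11⟩
def v2 : HatsV 1 2 := ⟨{2}, .single m12_2⟩
def v1 : HatsV 1 2 := ⟨{1}, .single m12_1⟩
def v0 : HatsV 1 2 := ⟨0, .tail (.single m12_1) m1_0⟩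

lemma classify (u : HatsV 1 2) : u = v12 ∨ u = v11 ∨ u = v2 ∨ u = v1 ∨ u = v0 := by
  obtain ⟨s, hs⟩ := u
  rcases reach12 hs with rfl | rfl | rfl | rfl | rfl
  · exact Or.inl (Subtype.ext rfl)
  · exact Or.inr (Or.inl (Subtype.ext rfl))
  · exact Or.inr (Or.inr (Or.inl (Subtype.ext rfl)))
  · exact Or.inr (Or.inr (Or.inr (Or.inl (Subtype.ext rfl))))
  · exact Or.inr (Or.inr (Or.inr (Or.inr (Subtype.ext rfl))))

lemma noSteps {u v : HatsV 1 2} (h : ¬ Relation.ReflTransGen HatsMove u.1 v.1) :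
    ∀ m, ¬ StepsTo (hatsR 1 2) m u v := fun _ hm =>
  h (Relation.ReflTransGen.lift Subtype.val (fun _ _ hab => hab) _ _ (stepsTo_rtg hm))

lemma vne {u v : HatsV 1 2} (h : u.1 ≠ v.1) : u ≠ v := fun he => h (congrArg Subtype.val he)

-- ddist facts
lemma d_self (u : HatsV 1 2) : ddist (hatsR 1 2) u u = (0 : ℕ) :=
  ddist_eq stepsTo_zero (fun m _ => Nat.zero_le m)

lemma d_11_1 : ddist (hatsR 1 2) v11 v1 = (1 : ℕ) := by
  refine ddist_eq ⟨v1, m11_1, stepsTo_zero⟩ (fun m hm => ?_)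
  match m with
  | 0 => exact absurd (congrArg Subtype.val (stepsTo_zero_eq hm)) (by decide)
  | m + 1 => omega

lemma d_11_0 : ddist (hatsR 1 2) v11 v0 = (2 : ℕ) := by
  refine ddist_eq ⟨v1, m11_1, v0, m1_0, stepsTo_zero⟩ (fun m hm => ?_)
  match m with
  | 0 => exact absurd (congrArg Subtype.val (stepsTo_zero_eq hm)) (by decide)
  | 1 =>
    obtain ⟨w, hw, hw0⟩ := stepsTo_succ_ex hm
    rcases stepsTo_zero_eq hw0 with rfl
    exact absurd (move11 hw) (by decide)
  | m + 2 => omega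

lemma d_12_11 : ddist (hatsR 1 2) v12 v11 = (1 : ℕ) := by
  refine ddist_eq ⟨v11, m12_11, stepsTo_zero⟩ (fun m hm => ?_)
  match m with
  | 0 => exact absurd (congrArg Subtype.val (stepsTo_zero_eq hm)) (by decide)
  | m + 1 => omega

lemma d_11_12 : ddist (hatsR 1 2) v11 v12 = ⊤ :=
  ddist_top (noSteps (fun h => by rcases reach11 h with h' | h' | h' <;> exact absurd h' (by decide)))

lemma d_11_2 : ddist (hatsR 1 2) v11 v2 = ⊤ :=
  ddist_top (noSteps (fun h => by rcases reach11 h with h' | h' | h' <;> exact absurd h' (by decide)))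

lemma d_2_11 : ddist (hatsR 1 2) v2 v11 = ⊤ :=
  ddist_top (noSteps (fun h => by rcases reach2 h with h' | h' <;> exact absurd h' (by decide)))

lemma d_1_11 : ddist (hatsR 1 2) v1 v11 = ⊤ :=
  ddist_top (noSteps (fun h => by rcases reach1 h with h' | h' <;> exact absurd h' (by decide)))

lemma d_0_11 : ddist (hatsR 1 2) v0 v11 = ⊤ :=
  ddist_top (noSteps (fun h => absurd (reach0 h) (by decide)))

-- sdist facts
lemma s_11_11 : sdist (hatsR 1 2) v11 v11 = ((0 : ℤ) : WithTop ℤ) := by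
  simp [sdist, d_self]

lemma s_11_1 : sdist (hatsR 1 2) v11 v1 = ((1 : ℤ) : WithTop ℤ) := by
  simp [sdist, d_11_1, d_1_11]

lemma s_11_0 : sdist (hatsR 1 2) v11 v0 = ((2 : ℤ) : WithTop ℤ) := by
  simp only [sdist, d_11_0, d_0_11, le_top, if_true]
  rfl

lemma s_11_12 : sdist (hatsR 1 2) v11 v12 = ((-1 : ℤ) : WithTop ℤ) := by
  simp [sdist, d_11_12, d_12_11]

lemma s_11_2 : sdist (hatsR 1 2) v11 v2 = ⊤ := by
  simp [sdist, d_11_2, d_2_11]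

lemma res : Resolves (hatsR 1 2) {v11} := by
  intro u v h
  have h' := h v11 rfl
  rcases classify u with rfl | rfl | rfl | rfl | rfl <;>
    rcases classify v with rfl | rfl | rfl | rfl | rfl <;>
    simp only [s_11_11, s_11_1, s_11_0, s_11_12, s_11_2] at h' <;>
    first
      | rfl
      | exact absurd h' (by decide)

/-- the hats-nim game graph `G(hats,{1,2})` has metric dimension 1 w.r.t.
signed distance; in particular the singleton `{{1,1}}` resolves it. -/
theorem stmt7 :
    metricDim (hatsR 1 2) = 1 ∧
    (∃ v : HatsV 1 2, v.1 = {1, 1} ∧ Resolves (hatsR 1 2) {v}) := by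
  refine ⟨?_, v11, rfl, res⟩
  have h1 : 1 ∈ {k : ℕ | ∃ S : Finset (HatsV 1 2), S.card = k ∧ Resolves (hatsR 1 2) ↑S} :=
    ⟨{v11}, Finset.card_singleton _, by simpa using res⟩
  refine le_antisymm (Nat.sInf_le h1) ?_
  by_contra hlt
  have h0 : sInf {k : ℕ | ∃ S : Finset (HatsV 1 2), S.card = k ∧ Resolves (hatsR 1 2) ↑S} = 0 :=
    Nat.lt_one_iff.mp (Nat.not_le.mp hlt)
  have hmem := Nat.sInf_mem ⟨1, h1⟩
  rw [h0] at hmem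
  obtain ⟨S, hc, hres⟩ := hmem
  rcases Finset.card_eq_zero.mp hc with rfl
  have := hres v12 v0 (fun s hs => absurd hs (by simp))
  exact vne (by decide) this
end

section
/- For every integer b ≥ 3, the hats-nim game graph G(hats,{1,b}) has metric dimension 2 with respect to signed distance; in particular, the set {{1}, {1,b}} resolves it and no single vertex does. -/
namespace S9
open Multiset

lemma mem_pair {a c x : ℕ} : x ∈ ({a, c} : Multiset ℕ) ↔ x = a ∨ x = c := by
  simp [Multiset.mem_cons, Multiset.mem_singleton]

lemma erase_pair_right {m : ℕ} (hm : m ≠ 1) : ({1, m} : Multiset ℕ).erase m = {1} := by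
  rw [show ({1, m} : Multiset ℕ) = 1 ::ₘ {m} from rfl,
    Multiset.erase_cons_tail _ (by simpa using hm.symm), Multiset.erase_singleton]
  rfl

lemma pair_ne_single {a c m : ℕ} : ({a, c} : Multiset ℕ) ≠ {m} := by
  intro h
  have := congrArg Multiset.card h
  simp at this

lemma pair_ne_zero {a c : ℕ} : ({a, c} : Multiset ℕ) ≠ 0 := by
  intro h
  have := congrArg Multiset.card h
  simp at this

lemma single_ne_zero' {m : ℕ} : ({m} : Multiset ℕ) ≠ 0 := by
  intro h
  have := congrArg Multiset.card h
  simp at this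

lemma single_inj {m k : ℕ} (h : ({m} : Multiset ℕ) = {k}) : m = k := by
  simpa using h

lemma pair_inj {m k : ℕ} (h : ({1, m} : Multiset ℕ) = {1, k}) : m = k := by
  have := (Multiset.cons_inj_right (1:ℕ)).mp h
  simpa using this

lemma not_hatsMove_zero {t : Multiset ℕ} : ¬ HatsMove 0 t := by
  rintro ⟨h, hh, -⟩
  simp at hh

lemma hatsMove_singleton {m : ℕ} {t : Multiset ℕ} (h : HatsMove {m} t) : t = 0 := by
  obtain ⟨h', hh, k, hk, hkh, ht⟩ := h
  rw [Multiset.mem_singleton] at hh hk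
  subst hh; subst hk
  simpa [lt_irrefl, Multiset.erase_singleton] using ht

lemma hatsMove_one_one {t : Multiset ℕ} (h : HatsMove {1, 1} t) : t = {1} := by
  obtain ⟨h', hh, k, hk, hkh, ht⟩ := h
  rw [mem_pair] at hh hk
  have h1 : h' = 1 := by omega
  have k1 : k = 1 := by omega
  subst h1; subst k1
  simpa [lt_irrefl] using ht

lemma hatsMove_pair {m : ℕ} {t : Multiset ℕ} (hm : 2 ≤ m) (h : HatsMove {1, m} t) :
    t = {1, m - 1} ∨ t = {m} ∨ t = {1} := by
  obtain ⟨h', hh, k, hk, hkh, ht⟩ := h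
  rw [mem_pair] at hh hk
  rcases hh with rfl | rfl
  · -- h' = 1, k ≤ 1 so k = 1
    have k1 : k = 1 := by omega
    subst k1
    right; left
    simpa [lt_irrefl] using ht
  · rcases hk with rfl | rfl
    · -- k = 1 < m
      left
      rw [if_pos (by omega), erase_pair_right (by omega)] at ht
      rw [ht]
      exact Multiset.cons_swap _ _ _
    · right; right
      rw [if_neg (lt_irrefl _), erase_pair_right (by omega)] at ht
      exact ht

lemma move_singleton {m : ℕ} : HatsMove {m} 0 :=
  ⟨m, Multiset.mem_singleton_self m, m, Multiset.mem_singleton_self m, le_refl m,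
    by simp [lt_irrefl, Multiset.erase_singleton]⟩

lemma move_pair_down {m : ℕ} (hm : 2 ≤ m) : HatsMove {1, m} {1, m - 1} :=
  ⟨m, mem_pair.mpr (Or.inr rfl), 1, mem_pair.mpr (Or.inl rfl), by omega,
    by rw [if_pos (by omega), erase_pair_right (by omega)]; exact (Multiset.cons_swap _ _ _).symm⟩

lemma move_pair_drop1 {m : ℕ} : HatsMove {1, m} {m} := by
  refine ⟨1, mem_pair.mpr (Or.inl rfl), 1, mem_pair.mpr (Or.inl rfl), le_refl 1, ?_⟩
  simp [lt_irrefl]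

lemma move_pair_dropm {m : ℕ} (hm : 2 ≤ m) : HatsMove {1, m} {1} :=
  ⟨m, mem_pair.mpr (Or.inr rfl), m, mem_pair.mpr (Or.inr rfl), le_refl m,
    by rw [if_neg (lt_irrefl _), erase_pair_right (by omega)]⟩

lemma move_one_one : HatsMove {1, 1} {1} :=
  ⟨1, mem_pair.mpr (Or.inl rfl), 1, mem_pair.mpr (Or.inl rfl), le_refl 1,
    by simp [lt_irrefl]⟩

lemma stepsTo_zero {V : Type*} {R : V → V → Prop} {u v : V} :
    StepsTo R 0 u v ↔ u = v := Iff.rfl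

lemma stepsTo_succ {V : Type*} {R : V → V → Prop} {j : ℕ} {u v : V} :
    StepsTo R (j + 1) u v ↔ ∃ w, R u w ∧ StepsTo R j w v := Iff.rfl

lemma stepsTo_one {V : Type*} {R : V → V → Prop} {u v : V} (h : R u v) :
    StepsTo R 1 u v := ⟨v, h, rfl⟩

lemma stepsTo_trans {V : Type*} {R : V → V → Prop} :
    ∀ {i : ℕ} {j : ℕ} {u w v : V}, StepsTo R i u w → StepsTo R j w v →
      StepsTo R (i + j) u v := by
  intro i
  induction i with
  | zero => intro j u w v h1 h2; rw [stepsTo_zero] at h1; subst h1; simpa using h2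
  | succ i ih =>
    intro j u w v h1 h2
    obtain ⟨x, hx, hs⟩ := h1
    exact (show i + 1 + j = (i + j) + 1 by omega) ▸ ⟨x, hx, ih hs h2⟩

lemma steps_zero_src {j : ℕ} {x : Multiset ℕ} (h : StepsTo HatsMove j 0 x) :
    j = 0 ∧ x = 0 := by
  cases j with
  | zero => exact ⟨rfl, h.symm⟩
  | succ j => obtain ⟨w, hw, -⟩ := h; exact absurd hw not_hatsMove_zero

lemma steps_singleton {m j : ℕ} {x : Multiset ℕ} (h : StepsTo HatsMove j {m} x) :
    (j = 0 ∧ x = {m}) ∨ (j = 1 ∧ x = 0) := by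
  cases j with
  | zero => exact Or.inl ⟨rfl, h.symm⟩
  | succ j =>
    obtain ⟨w, hw, hs⟩ := h
    rw [hatsMove_singleton hw] at hs
    obtain ⟨rfl, rfl⟩ := steps_zero_src hs
    exact Or.inr ⟨rfl, rfl⟩

lemma steps_pair : ∀ j m, 1 ≤ m → ∀ x : Multiset ℕ, StepsTo HatsMove j {1, m} x →
    (x = {1, m - j} ∧ j < m) ∨
    (∃ k, 2 ≤ k ∧ k ≤ m ∧ x = {k} ∧ j = m - k + 1) ∨
    (x = {1} ∧ 1 ≤ j ∧ j ≤ m) ∨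
    (x = 0 ∧ 2 ≤ j ∧ j ≤ m + 1) := by
  intro j
  induction j with
  | zero =>
    intro m hm x h
    rw [stepsTo_zero] at h
    exact Or.inl ⟨by rw [← h, Nat.sub_zero], hm⟩
  | succ j ih =>
    intro m hm x h
    obtain ⟨w, hw, hs⟩ := h
    rcases Nat.lt_or_ge m 2 with hm2 | hm2
    · -- m = 1
      have : m = 1 := by omega
      subst this
      rw [hatsMove_one_one hw] at hs
      rcases steps_singleton hs with ⟨rfl, rfl⟩ | ⟨rfl, rfl⟩
      · exact Or.inr (Or.inr (Or.inl ⟨rfl, by omega, by omega⟩))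
      · exact Or.inr (Or.inr (Or.inr ⟨rfl, by omega, by omega⟩))
    · rcases hatsMove_pair hm2 hw with rfl | rfl | rfl
      · rcases ih (m - 1) (by omega) x hs with ⟨hx, hj⟩ | ⟨k, hk2, hkm, hx, hj⟩ |
          ⟨hx, hj1, hj2⟩ | ⟨hx, hj1, hj2⟩
        · refine Or.inl ⟨?_, by omega⟩
          rw [hx, show m - 1 - j = m - (j + 1) from by omega]
        · exact Or.inr (Or.inl ⟨k, hk2, by omega, hx, by omega⟩)
        · exact Or.inr (Or.inr (Or.inl ⟨hx, by omega, by omega⟩))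
        · exact Or.inr (Or.inr (Or.inr ⟨hx, by omega, by omega⟩))
      · rcases steps_singleton hs with ⟨rfl, rfl⟩ | ⟨rfl, rfl⟩
        · exact Or.inr (Or.inl ⟨m, hm2, le_refl m, rfl, by omega⟩)
        · exact Or.inr (Or.inr (Or.inr ⟨rfl, by omega, by omega⟩))
      · rcases steps_singleton hs with ⟨rfl, rfl⟩ | ⟨rfl, rfl⟩
        · exact Or.inr (Or.inr (Or.inl ⟨rfl, by omega, by omega⟩))
        · exact Or.inr (Or.inr (Or.inr ⟨rfl, by omega, by omega⟩))

lemma steps_chain : ∀ d m, 1 ≤ m → StepsTo HatsMove d {1, m + d} {1, m} := by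
  intro d
  induction d with
  | zero => intro m hm; rfl
  | succ d ih =>
    intro m hm
    refine ⟨{1, m + d}, ?_, ih m hm⟩
    have := move_pair_down (m := m + d + 1) (by omega)
    simpa [Nat.add_sub_cancel, Nat.add_assoc] using this

/-- shape predicate for vertices of `G(hats,{1,b})` -/
def P (b : ℕ) (s : Multiset ℕ) : Prop :=
  s = 0 ∨ (∃ m, 1 ≤ m ∧ m ≤ b ∧ s = {m}) ∨ (∃ m, 1 ≤ m ∧ m ≤ b ∧ s = {1, m})

lemma P_closed {b : ℕ} (hb : 1 ≤ b) {s t : Multiset ℕ} (hs : P b s) (h : HatsMove s t) :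
    P b t := by
  rcases hs with rfl | ⟨m, h1, h2, rfl⟩ | ⟨m, h1, h2, rfl⟩
  · exact absurd h not_hatsMove_zero
  · exact Or.inl (hatsMove_singleton h)
  · rcases Nat.lt_or_ge m 2 with hm2 | hm2
    · have : m = 1 := by omega
      subst this
      exact Or.inr (Or.inl ⟨1, le_refl 1, hb, hatsMove_one_one h⟩)
    · rcases hatsMove_pair hm2 h with rfl | rfl | rfl
      · exact Or.inr (Or.inr ⟨m - 1, by omega, by omega, rfl⟩)
      · exact Or.inr (Or.inl ⟨m, by omega, h2, rfl⟩)
      · exact Or.inr (Or.inl ⟨1, le_refl 1, hb, rfl⟩)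

lemma vertex_shape {b : ℕ} (hb : 1 ≤ b) (w : HatsV 1 b) : P b w.1 := by
  obtain ⟨s, hs⟩ := w
  induction hs with
  | refl => exact Or.inr (Or.inr ⟨b, hb, le_refl b, rfl⟩)
  | tail _ h ih => exact P_closed hb ih h

lemma stepsTo_reflTransGen {V : Type*} {R : V → V → Prop} :
    ∀ {j : ℕ} {u v : V}, StepsTo R j u v → Relation.ReflTransGen R u v := by
  intro j
  induction j with
  | zero => intro u v h; rw [stepsTo_zero] at h; exact h ▸ Relation.ReflTransGen.refl
  | succ j ih =>
    intro u v h
    obtain ⟨w, hw, hs⟩ := h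
    exact Relation.ReflTransGen.head hw (ih hs)

lemma reach_pair {b m : ℕ} (h1 : 1 ≤ m) (h2 : m ≤ b) :
    Relation.ReflTransGen HatsMove {1, b} {1, m} := by
  have := steps_chain (b - m) m h1
  rw [show m + (b - m) = b from by omega] at this
  exact stepsTo_reflTransGen this

lemma reach_single {b m : ℕ} (hb : 2 ≤ b) (h1 : 1 ≤ m) (h2 : m ≤ b) :
    Relation.ReflTransGen HatsMove {1, b} {m} := by
  rcases Nat.lt_or_ge m 2 with hm | hm
  · have : m = 1 := by omega
    subst this
    exact (reach_pair (by omega) hb).tail (move_pair_dropm (le_refl 2))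
  · exact (reach_pair h1 h2).tail move_pair_drop1

lemma reach_zero {b : ℕ} (hb : 2 ≤ b) : Relation.ReflTransGen HatsMove {1, b} 0 :=
  (reach_single hb (le_refl 1) (by omega)).tail move_singleton

lemma lift_steps {a b : ℕ} :
    ∀ {j : ℕ} (u : HatsV a b) {t : Multiset ℕ}, StepsTo HatsMove j u.1 t →
      ∃ v : HatsV a b, v.1 = t ∧ StepsTo (hatsR a b) j u v := by
  intro j
  induction j with
  | zero =>
    intro u t h
    rw [stepsTo_zero] at h
    exact ⟨u, h, rfl⟩
  | succ j ih =>
    intro u t h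
    obtain ⟨w, hw, hs⟩ := h
    obtain ⟨v, hv, hsteps⟩ := ih ⟨w, u.2.tail hw⟩ hs
    exact ⟨v, hv, ⟨⟨w, u.2.tail hw⟩, hw, hsteps⟩⟩

lemma proj_steps {a b : ℕ} :
    ∀ {j : ℕ} {u v : HatsV a b}, StepsTo (hatsR a b) j u v →
      StepsTo HatsMove j u.1 v.1 := by
  intro j
  induction j with
  | zero => intro u v h; rw [stepsTo_zero] at h; exact h ▸ rfl
  | succ j ih =>
    intro u v h
    obtain ⟨w, hw, hs⟩ := h
    exact ⟨w.1, hw, ih hs⟩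

lemma ddist_le {V : Type*} {R : V → V → Prop} {u v : V} {n : ℕ}
    (h : StepsTo R n u v) : ddist R u v ≤ n :=
  sInf_le ⟨n, h, rfl⟩

lemma ddist_eq {V : Type*} {R : V → V → Prop} {u v : V} {n : ℕ}
    (h1 : StepsTo R n u v) (h2 : ∀ m, StepsTo R m u v → n ≤ m) :
    ddist R u v = n := by
  refine le_antisymm (ddist_le h1) (le_sInf ?_)
  rintro x ⟨m, hm, rfl⟩
  show (n : ℕ∞) ≤ (m : ℕ∞)
  exact_mod_cast h2 m hm

lemma ddist_top {V : Type*} {R : V → V → Prop} {u v : V}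
    (h : ∀ m, ¬ StepsTo R m u v) : ddist R u v = ⊤ := by
  have : {m : ℕ | StepsTo R m u v} = ∅ := Set.eq_empty_of_forall_notMem h
  rw [ddist, this]
  simp

lemma sdist_self {V : Type*} {R : V → V → Prop} {u : V} : sdist R u u = 0 := by
  have h0 : ddist R u u = (0 : ℕ) := ddist_eq (by rfl) (fun m _ => Nat.zero_le m)
  rw [sdist, h0, if_pos le_rfl]
  simp

lemma sdist_of_forward {V : Type*} {R : V → V → Prop} {u v : V} {n : ℕ}
    (h1 : ddist R u v = (n : ℕ∞)) (h2 : ddist R v u = ⊤) :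
    sdist R u v = ((n : ℤ) : WithTop ℤ) := by
  rw [sdist, h1, h2, if_pos le_top]
  rfl

lemma sdist_of_backward {V : Type*} {R : V → V → Prop} {u v : V} {n : ℕ}
    (h1 : ddist R u v = ⊤) (h2 : ddist R v u = (n : ℕ∞)) :
    sdist R u v = ((-(n : ℤ)) : WithTop ℤ) := by
  rw [sdist, h1, h2, if_neg (by simp)]
  rfl

lemma sdist_of_top {V : Type*} {R : V → V → Prop} {u v : V}
    (h1 : ddist R u v = ⊤) (h2 : ddist R v u = ⊤) :
    sdist R u v = ⊤ := by
  rw [sdist, h1, h2, if_pos le_rfl]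
  rfl

lemma ddist_hats_eq {a b : ℕ} {u v : HatsV a b} {n : ℕ}
    (h1 : StepsTo HatsMove n u.1 v.1)
    (h2 : ∀ m, StepsTo HatsMove m u.1 v.1 → n ≤ m) :
    ddist (hatsR a b) u v = (n : ℕ∞) := by
  obtain ⟨v', hv', hs⟩ := lift_steps u h1
  have hvv : v' = v := Subtype.ext hv'
  subst hvv
  exact ddist_eq hs (fun m hm => h2 m (proj_steps hm))

lemma ddist_hats_top {a b : ℕ} {u v : HatsV a b}
    (h : ∀ m, ¬ StepsTo HatsMove m u.1 v.1) : ddist (hatsR a b) u v = ⊤ :=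
  ddist_top (fun m hm => h m (proj_steps hm))

lemma dd_pair_pair {b m k : ℕ} {u v : HatsV 1 b} (hu : u.1 = {1, m}) (hv : v.1 = {1, k})
    (h1 : 1 ≤ k) (h2 : k ≤ m) : ddist (hatsR 1 b) u v = ((m - k : ℕ) : ℕ∞) := by
  apply ddist_hats_eq
  · rw [hu, hv]
    have := steps_chain (m - k) k h1
    rwa [show k + (m - k) = m from by omega] at this
  · intro j hj
    rw [hu, hv] at hj
    rcases steps_pair j m (by omega) _ hj with ⟨hx, hjm⟩ | ⟨k', hk2, hkm, hx, rfl⟩ |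
      ⟨hx, -, -⟩ | ⟨hx, -, -⟩
    · have := pair_inj hx
      omega
    · exact absurd hx pair_ne_single
    · exact absurd hx pair_ne_single
    · exact absurd hx pair_ne_zero

lemma dd_pair_pair_top {b m k : ℕ} {u v : HatsV 1 b} (hu : u.1 = {1, k}) (hv : v.1 = {1, m})
    (h1 : 1 ≤ k) (h : k < m) : ddist (hatsR 1 b) u v = ⊤ := by
  apply ddist_hats_top
  intro j hj
  rw [hu, hv] at hj
  rcases steps_pair j k h1 _ hj with ⟨hx, hjm⟩ | ⟨k', hk2, hkm, hx, -⟩ |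
    ⟨hx, -, -⟩ | ⟨hx, -, -⟩
  · have := pair_inj hx
    omega
  · exact absurd hx pair_ne_single
  · exact absurd hx pair_ne_single
  · exact absurd hx pair_ne_zero

lemma dd_pair_single {b m k : ℕ} {u v : HatsV 1 b} (hu : u.1 = {1, m}) (hv : v.1 = {k})
    (h2 : 2 ≤ k) (hkm : k ≤ m) : ddist (hatsR 1 b) u v = ((m - k + 1 : ℕ) : ℕ∞) := by
  apply ddist_hats_eq
  · rw [hu, hv]
    have hc := steps_chain (m - k) k (by omega)
    rw [show k + (m - k) = m from by omega] at hc
    exact stepsTo_trans hc (stepsTo_one move_pair_drop1)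
  · intro j hj
    rw [hu, hv] at hj
    rcases steps_pair j m (by omega) _ hj with ⟨hx, -⟩ | ⟨k', hk2, hkm', hx, rfl⟩ |
      ⟨hx, -, -⟩ | ⟨hx, -, -⟩
    · exact absurd hx.symm pair_ne_single
    · have := single_inj hx
      omega
    · have := single_inj hx
      omega
    · exact absurd hx single_ne_zero'

lemma dd_pair_single_top {b m k : ℕ} {u v : HatsV 1 b} (hu : u.1 = {1, m}) (hm : 1 ≤ m)
    (hv : v.1 = {k}) (h2 : 2 ≤ k) (hk : m < k) : ddist (hatsR 1 b) u v = ⊤ := by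
  apply ddist_hats_top
  intro j hj
  rw [hu, hv] at hj
  rcases steps_pair j m hm _ hj with ⟨hx, -⟩ | ⟨k', hk2, hkm', hx, -⟩ |
    ⟨hx, -, -⟩ | ⟨hx, -, -⟩
  · exact absurd hx.symm pair_ne_single
  · have := single_inj hx
    omega
  · have := single_inj hx
    omega
  · exact absurd hx single_ne_zero'

lemma dd_pair_one {b m : ℕ} {u v : HatsV 1 b} (hu : u.1 = {1, m}) (hm : 1 ≤ m)
    (hv : v.1 = {1}) : ddist (hatsR 1 b) u v = (1 : ℕ) := by
  apply ddist_hats_eq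
  · rw [hu, hv]
    rcases Nat.lt_or_ge m 2 with hm2 | hm2
    · have : m = 1 := by omega
      subst this
      exact stepsTo_one move_one_one
    · exact stepsTo_one (move_pair_dropm hm2)
  · intro j hj
    rw [hu, hv] at hj
    cases j with
    | zero => rw [stepsTo_zero] at hj; exact absurd hj pair_ne_single
    | succ j => omega

lemma dd_pair_zero {b m : ℕ} {u v : HatsV 1 b} (hu : u.1 = {1, m}) (hm : 1 ≤ m)
    (hv : v.1 = 0) : ddist (hatsR 1 b) u v = (2 : ℕ) := by
  apply ddist_hats_eq
  · rw [hu, hv]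
    have step1 : StepsTo HatsMove 1 ({1, m} : Multiset ℕ) {1} := by
      rcases Nat.lt_or_ge m 2 with hm2 | hm2
      · have : m = 1 := by omega
        subst this
        exact stepsTo_one move_one_one
      · exact stepsTo_one (move_pair_dropm hm2)
    exact stepsTo_trans step1 (stepsTo_one move_singleton)
  · intro j hj
    rw [hu, hv] at hj
    rcases steps_pair j m hm _ hj with ⟨hx, -⟩ | ⟨k', hk2, hkm', hx, -⟩ |
      ⟨hx, -, -⟩ | ⟨-, hj2, -⟩
    · exact absurd hx.symm pair_ne_zero
    · exact absurd hx.symm single_ne_zero'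
    · exact absurd hx.symm single_ne_zero'
    · omega

lemma dd_single_zero {b m : ℕ} {u v : HatsV 1 b} (hu : u.1 = {m}) (hv : v.1 = 0) :
    ddist (hatsR 1 b) u v = (1 : ℕ) := by
  apply ddist_hats_eq
  · rw [hu, hv]
    exact stepsTo_one move_singleton
  · intro j hj
    rw [hu, hv] at hj
    cases j with
    | zero => rw [stepsTo_zero] at hj; exact absurd hj single_ne_zero'
    | succ j => omega

lemma dd_single_top {b m : ℕ} {u v : HatsV 1 b} (hu : u.1 = {m}) (h1 : v.1 ≠ {m})
    (h2 : v.1 ≠ 0) : ddist (hatsR 1 b) u v = ⊤ := by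
  apply ddist_hats_top
  intro j hj
  rw [hu] at hj
  rcases steps_singleton hj with ⟨-, hx⟩ | ⟨-, hx⟩
  · exact h1 hx
  · exact h2 hx

lemma dd_zero_top {b : ℕ} {u v : HatsV 1 b} (hu : u.1 = 0) (hv : v.1 ≠ 0) :
    ddist (hatsR 1 b) u v = ⊤ := by
  apply ddist_hats_top
  intro j hj
  rw [hu] at hj
  exact hv (steps_zero_src hj).2

-- sdist values from landmark u0 (the vertex {1})
lemma sdist_u0_pair {b m : ℕ} {u x : HatsV 1 b} (hu : u.1 = {1}) (hx : x.1 = {1, m})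
    (hm : 1 ≤ m) : sdist (hatsR 1 b) u x = ((-1 : ℤ) : WithTop ℤ) := by
  have h1 : ddist (hatsR 1 b) u x = ⊤ :=
    dd_single_top hu (by rw [hx]; exact fun h => pair_ne_single h)
      (by rw [hx]; exact pair_ne_zero)
  have h2 : ddist (hatsR 1 b) x u = ((1 : ℕ) : ℕ∞) := dd_pair_one hx hm hu
  have := sdist_of_backward h1 h2
  simpa using this

lemma sdist_u0_single {b m : ℕ} {u x : HatsV 1 b} (hu : u.1 = {1}) (hx : x.1 = {m})
    (hm : 2 ≤ m) : sdist (hatsR 1 b) u x = ⊤ := by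
  refine sdist_of_top (dd_single_top hu ?_ ?_) (dd_single_top hx ?_ ?_)
  · rw [hx]; intro h; have := single_inj h; omega
  · rw [hx]; exact single_ne_zero'
  · rw [hu]; intro h; have := single_inj h; omega
  · rw [hu]; exact single_ne_zero'

lemma sdist_u0_zero {b : ℕ} {u x : HatsV 1 b} (hu : u.1 = {1}) (hx : x.1 = 0) :
    sdist (hatsR 1 b) u x = ((1 : ℤ) : WithTop ℤ) := by
  have h1 : ddist (hatsR 1 b) u x = ((1 : ℕ) : ℕ∞) := dd_single_zero hu hx
  have h2 : ddist (hatsR 1 b) x u = ⊤ :=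
    dd_zero_top hx (by rw [hu]; exact single_ne_zero')
  have := sdist_of_forward h1 h2
  simpa using this

lemma sdist_u0_one {b : ℕ} {u x : HatsV 1 b} (hu : u.1 = {1}) (hx : x.1 = {1}) :
    sdist (hatsR 1 b) u x = (0 : WithTop ℤ) := by
  have : u = x := Subtype.ext (by rw [hu, hx])
  subst this
  exact sdist_self

-- sdist values from landmark v0 (the vertex {1,b})
lemma sdist_v0_pair {b m : ℕ} {v x : HatsV 1 b} (hv : v.1 = {1, b}) (hx : x.1 = {1, m})
    (h1 : 1 ≤ m) (h2 : m ≤ b) :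
    sdist (hatsR 1 b) v x = (((b - m : ℕ) : ℤ) : WithTop ℤ) := by
  rcases Nat.lt_or_ge m b with hmb | hmb
  · have hf : ddist (hatsR 1 b) v x = ((b - m : ℕ) : ℕ∞) := dd_pair_pair hv hx h1 (by omega)
    have hb : ddist (hatsR 1 b) x v = ⊤ := dd_pair_pair_top hx hv h1 hmb
    exact sdist_of_forward hf hb
  · have : m = b := by omega
    subst this
    have : v = x := Subtype.ext (by rw [hv, hx])
    subst this
    rw [sdist_self]
    simp

lemma sdist_v0_single {b k : ℕ} {v x : HatsV 1 b} (hv : v.1 = {1, b}) (hx : x.1 = {k})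
    (h1 : 2 ≤ k) (h2 : k ≤ b) :
    sdist (hatsR 1 b) v x = (((b - k + 1 : ℕ) : ℤ) : WithTop ℤ) := by
  have hf : ddist (hatsR 1 b) v x = ((b - k + 1 : ℕ) : ℕ∞) := dd_pair_single hv hx h1 h2
  have hb : ddist (hatsR 1 b) x v = ⊤ :=
    dd_single_top hx (by rw [hv]; exact fun h => pair_ne_single h)
      (by rw [hv]; exact pair_ne_zero)
  exact sdist_of_forward hf hb

lemma sdist_v0_one {b : ℕ} {v x : HatsV 1 b} (hb : 1 ≤ b) (hv : v.1 = {1, b})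
    (hx : x.1 = {1}) : sdist (hatsR 1 b) v x = ((1 : ℤ) : WithTop ℤ) := by
  have hf : ddist (hatsR 1 b) v x = ((1 : ℕ) : ℕ∞) := dd_pair_one hv hb hx
  have hb2 : ddist (hatsR 1 b) x v = ⊤ :=
    dd_single_top hx (by rw [hv]; exact fun h => pair_ne_single h)
      (by rw [hv]; exact pair_ne_zero)
  have := sdist_of_forward hf hb2
  simpa using this

lemma sdist_v0_zero {b : ℕ} {v x : HatsV 1 b} (hb : 1 ≤ b) (hv : v.1 = {1, b})
    (hx : x.1 = 0) : sdist (hatsR 1 b) v x = ((2 : ℤ) : WithTop ℤ) := by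
  have hf : ddist (hatsR 1 b) v x = ((2 : ℕ) : ℕ∞) := dd_pair_zero hv hb hx
  have hb2 : ddist (hatsR 1 b) x v = ⊤ := dd_zero_top hx (by rw [hv]; exact pair_ne_zero)
  have := sdist_of_forward hf hb2
  simpa using this

-- sdist values used to defeat single landmarks
lemma sdist_pair_B1 {b m : ℕ} {w x : HatsV 1 b} (hw : w.1 = {1, m}) (hm : 1 ≤ m)
    (hx : x.1 = {1}) : sdist (hatsR 1 b) w x = ((1 : ℤ) : WithTop ℤ) := by
  have hf : ddist (hatsR 1 b) w x = ((1 : ℕ) : ℕ∞) := dd_pair_one hw hm hx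
  have hb2 : ddist (hatsR 1 b) x w = ⊤ :=
    dd_single_top hx (by rw [hw]; exact fun h => pair_ne_single h)
      (by rw [hw]; exact pair_ne_zero)
  have := sdist_of_forward hf hb2
  simpa using this

lemma sdist_pair_prev {b m : ℕ} {w x : HatsV 1 b} (hw : w.1 = {1, m}) (hm : 2 ≤ m)
    (hx : x.1 = {1, m - 1}) : sdist (hatsR 1 b) w x = ((1 : ℤ) : WithTop ℤ) := by
  have hf : ddist (hatsR 1 b) w x = ((m - (m - 1) : ℕ) : ℕ∞) :=
    dd_pair_pair hw hx (by omega) (by omega)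
  rw [show m - (m - 1) = 1 from by omega] at hf
  have hb2 : ddist (hatsR 1 b) x w = ⊤ := dd_pair_pair_top hx hw (by omega) (by omega)
  have := sdist_of_forward hf hb2
  simpa using this

lemma sdist_pair_single_top {b m k : ℕ} {w x : HatsV 1 b} (hw : w.1 = {1, m}) (hm : 1 ≤ m)
    (hx : x.1 = {k}) (h2 : 2 ≤ k) (hk : m < k) : sdist (hatsR 1 b) w x = ⊤ := by
  refine sdist_of_top (dd_pair_single_top hw hm hx h2 hk) (dd_single_top hx ?_ ?_)
  · rw [hw]; exact fun h => pair_ne_single h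
  · rw [hw]; exact pair_ne_zero

lemma sdist_single_single_top {b m k : ℕ} {w x : HatsV 1 b} (hw : w.1 = {m}) (hx : x.1 = {k})
    (h : m ≠ k) : sdist (hatsR 1 b) w x = ⊤ := by
  refine sdist_of_top (dd_single_top hw ?_ ?_) (dd_single_top hx ?_ ?_)
  · rw [hx]; intro hq; exact h (single_inj hq).symm
  · rw [hx]; exact single_ne_zero'
  · rw [hw]; intro hq; exact h (single_inj hq)
  · rw [hw]; exact single_ne_zero'

lemma sdist_zero_single {b k : ℕ} {w x : HatsV 1 b} (hw : w.1 = 0) (hx : x.1 = {k}) :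
    sdist (hatsR 1 b) w x = ((-1 : ℤ) : WithTop ℤ) := by
  have h1 : ddist (hatsR 1 b) w x = ⊤ := dd_zero_top hw (by rw [hx]; exact single_ne_zero')
  have h2 : ddist (hatsR 1 b) x w = ((1 : ℕ) : ℕ∞) := dd_single_zero hx hw
  have := sdist_of_backward h1 h2
  simpa using this

end S9

open S9 in
/-- for every `b ≥ 3`, `G(hats,{1,b})` has metric dimension 2 w.r.t.
signed distance; in particular `{{1},{1,b}}` resolves it and no single vertex does. -/
theorem stmt9 (b : ℕ) (hb : 3 ≤ b) :
    metricDim (hatsR 1 b) = 2 ∧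
    (∃ u v : HatsV 1 b, u.1 = {1} ∧ v.1 = {1, b} ∧ Resolves (hatsR 1 b) {u, v}) ∧
    (∀ w : HatsV 1 b, ¬ Resolves (hatsR 1 b) {w}) := by
  have hb1 : 1 ≤ b := by omega
  set u0 : HatsV 1 b := ⟨{1}, reach_single (by omega) le_rfl hb1⟩ with hu0def
  set v0 : HatsV 1 b := ⟨{1, b}, Relation.ReflTransGen.refl⟩ with hv0def
  have hu0 : u0.1 = {1} := rfl
  have hv0 : v0.1 = {1, b} := rfl
  -- the pair {u0, v0} resolves
  have hres : Resolves (hatsR 1 b) {u0, v0} := by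
    intro u v h
    have h0 := h u0 (Set.mem_insert _ _)
    have h1 := h v0 (Set.mem_insert_of_mem _ rfl)
    rcases vertex_shape hb1 u with hu | ⟨m, hm1, hm2, hu⟩ | ⟨m, hm1, hm2, hu⟩ <;>
      rcases vertex_shape hb1 v with hv | ⟨k, hk1, hk2, hv⟩ | ⟨k, hk1, hk2, hv⟩
    · exact Subtype.ext (by rw [hu, hv])
    · -- u = 0, v = {k}
      rcases Nat.lt_or_ge k 2 with hk' | hk'
      · rw [sdist_u0_zero hu0 hu, sdist_u0_one hu0 (by rw [hv]; congr 1; omega)] at h0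
        exact absurd h0 (by decide)
      · rw [sdist_u0_zero hu0 hu, sdist_u0_single hu0 hv hk'] at h0
        exact absurd h0 (by decide)
    · rw [sdist_u0_zero hu0 hu, sdist_u0_pair hu0 hv hk1] at h0
      exact absurd h0 (by decide)
    · -- u = {m}, v = 0
      rcases Nat.lt_or_ge m 2 with hm' | hm'
      · rw [sdist_u0_zero hu0 hv, sdist_u0_one hu0 (by rw [hu]; congr 1; omega)] at h0
        exact absurd h0.symm (by decide)
      · rw [sdist_u0_zero hu0 hv, sdist_u0_single hu0 hu hm'] at h0
        exact absurd h0.symm (by decide)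
    · -- u = {m}, v = {k}
      rcases Nat.lt_or_ge m 2 with hm' | hm' <;> rcases Nat.lt_or_ge k 2 with hk' | hk'
      · exact Subtype.ext (by rw [hu, hv]; congr 1; omega)
      · rw [sdist_u0_one hu0 (by rw [hu]; congr 1; omega), sdist_u0_single hu0 hv hk'] at h0
        exact absurd h0 (by decide)
      · rw [sdist_u0_one (x := v) hu0 (by rw [hv]; congr 1; omega), sdist_u0_single hu0 hu hm'] at h0
        exact absurd h0.symm (by decide)
      · rw [sdist_v0_single hv0 hu hm' hm2, sdist_v0_single hv0 hv hk' hk2] at h1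
        have h1' : ((b - m + 1 : ℕ) : ℤ) = ((b - k + 1 : ℕ) : ℤ) := by exact_mod_cast h1
        have h1'' : b - m + 1 = b - k + 1 := by exact_mod_cast h1'
        have hmk : m = k := by omega
        exact Subtype.ext (by rw [hu, hv, hmk])
    · -- u = {m}, v = {1,k}
      rcases Nat.lt_or_ge m 2 with hm' | hm'
      · rw [sdist_u0_one hu0 (by rw [hu]; congr 1; omega), sdist_u0_pair hu0 hv hk1] at h0
        exact absurd h0 (by decide)
      · rw [sdist_u0_single hu0 hu hm', sdist_u0_pair hu0 hv hk1] at h0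
        exact absurd h0 (by decide)
    · rw [sdist_u0_zero hu0 hv, sdist_u0_pair hu0 hu hm1] at h0
      exact absurd h0.symm (by decide)
    · -- u = {1,m}, v = {k}
      rcases Nat.lt_or_ge k 2 with hk' | hk'
      · rw [sdist_u0_one (x := v) hu0 (by rw [hv]; congr 1; omega), sdist_u0_pair hu0 hu hm1] at h0
        exact absurd h0.symm (by decide)
      · rw [sdist_u0_single hu0 hv hk', sdist_u0_pair hu0 hu hm1] at h0
        exact absurd h0.symm (by decide)
    · -- u = {1,m}, v = {1,k}
      rw [sdist_v0_pair hv0 hu hm1 hm2, sdist_v0_pair hv0 hv hk1 hk2] at h1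
      have h1' : ((b - m : ℕ) : ℤ) = ((b - k : ℕ) : ℤ) := by exact_mod_cast h1
      have h1'' : b - m = b - k := by exact_mod_cast h1'
      have hmk : m = k := by omega
      exact Subtype.ext (by rw [hu, hv, hmk])
  -- no single vertex resolves
  have nores : ∀ w : HatsV 1 b, ¬ Resolves (hatsR 1 b) {w} := by
    intro w hresw
    have key : ∀ x y : HatsV 1 b, sdist (hatsR 1 b) w x = sdist (hatsR 1 b) w y →
        x.1 ≠ y.1 → False := by
      intro x y hxy hne
      exact hne (congrArg Subtype.val (hresw x y (by
        intro s hs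
        rw [Set.mem_singleton_iff] at hs
        subst hs
        exact hxy)))
    have vs : ∀ k, 1 ≤ k → k ≤ b → Relation.ReflTransGen HatsMove {1, b} {k} :=
      fun k h1 h2 => reach_single (by omega) h1 h2
    rcases vertex_shape hb1 w with hw | ⟨m, hm1, hm2, hw⟩ | ⟨m, hm1, hm2, hw⟩
    · -- w = 0
      refine key ⟨{1}, vs 1 (by omega) (by omega)⟩ ⟨{2}, vs 2 (by omega) (by omega)⟩ ?_ ?_
      · refine (sdist_zero_single (k := 1) hw ?_).trans (sdist_zero_single (k := 2) hw ?_).symm <;> rfl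
      · intro h; have := single_inj h; omega
    · -- w = {m}
      rcases Nat.lt_or_ge m 2 with hm' | hm'
      · refine key ⟨{2}, vs 2 (by omega) (by omega)⟩ ⟨{3}, vs 3 (by omega) (by omega)⟩ ?_ ?_
        · refine (sdist_single_single_top (k := 2) hw ?_ (by omega)).trans (sdist_single_single_top (k := 3) hw ?_ (by omega)).symm <;> rfl
        · intro h; have := single_inj h; omega
      · rcases Nat.lt_or_ge m 3 with hm'' | hm''
        · refine key ⟨{1}, vs 1 (by omega) (by omega)⟩ ⟨{3}, vs 3 (by omega) (by omega)⟩ ?_ ?_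
          · refine (sdist_single_single_top (k := 1) hw ?_ (by omega)).trans (sdist_single_single_top (k := 3) hw ?_ (by omega)).symm <;> rfl
          · intro h; have := single_inj h; omega
        · refine key ⟨{1}, vs 1 (by omega) (by omega)⟩ ⟨{2}, vs 2 (by omega) (by omega)⟩ ?_ ?_
          · refine (sdist_single_single_top (k := 1) hw ?_ (by omega)).trans (sdist_single_single_top (k := 2) hw ?_ (by omega)).symm <;> rfl
          · intro h; have := single_inj h; omega
    · -- w = {1,m}
      rcases Nat.lt_or_ge m 2 with hm' | hm'
      · refine key ⟨{2}, vs 2 (by omega) (by omega)⟩ ⟨{3}, vs 3 (by omega) (by omega)⟩ ?_ ?_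
        · refine (sdist_pair_single_top (k := 2) hw hm1 ?_ (by omega) (by omega)).trans
            (sdist_pair_single_top (k := 3) hw hm1 ?_ (by omega) (by omega)).symm <;> rfl
        · intro h; have := single_inj h; omega
      · refine key ⟨{1, m - 1}, reach_pair (by omega) (by omega)⟩
          ⟨{1}, vs 1 (by omega) (by omega)⟩ ?_ ?_
        · refine (sdist_pair_prev hw hm' ?_).trans (sdist_pair_B1 hw hm1 ?_).symm <;> rfl
        · exact fun h => pair_ne_single h
  refine ⟨?_, ⟨u0, v0, hu0, hv0, hres⟩, nores⟩
  -- metric dimension = 2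
  have hne : u0 ≠ v0 := by
    intro h
    have : u0.1 = v0.1 := congrArg Subtype.val h
    exact pair_ne_single (this.symm)
  set S : Finset (HatsV 1 b) :=
    ⟨u0 ::ₘ v0 ::ₘ 0, by
      rw [Multiset.nodup_cons]
      exact ⟨by simpa using hne, Multiset.nodup_singleton v0⟩⟩ with hSdef
  have hScard : S.card = 2 := rfl
  have hScoe : (↑S : Set (HatsV 1 b)) = {u0, v0} := by
    ext x
    simp [hSdef, Finset.mem_coe, Finset.mem_mk, Set.mem_insert_iff]
  have h2mem : 2 ∈ {k : ℕ | ∃ T : Finset (HatsV 1 b), T.card = k ∧ Resolves (hatsR 1 b) ↑T} :=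
    ⟨S, hScard, by rw [hScoe]; exact hres⟩
  have hge : ∀ k ∈ {k : ℕ | ∃ T : Finset (HatsV 1 b), T.card = k ∧ Resolves (hatsR 1 b) ↑T},
      2 ≤ k := by
    rintro k ⟨T, hTcard, hTres⟩
    by_contra hk
    push_neg at hk
    interval_cases k
    · rw [Finset.card_eq_zero] at hTcard
      subst hTcard
      have := hTres u0 v0 (by intro s hs; simp at hs)
      exact hne this
    · rw [Finset.card_eq_one] at hTcard
      obtain ⟨w, rfl⟩ := hTcard
      rw [Finset.coe_singleton] at hTres
      exact nores w hTres
  exact le_antisymm (Nat.sInf_le h2mem) (le_csInf ⟨2, h2mem⟩ hge)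
end

section
/- For every integer n ≥ 2, the two-bishop game graph on the 2×n board satisfies β(B_L(2,n) □ B_D(2,n)) = 2. -/
/-- The bishop graph on an `a × b` board: squares `(r,c)` and `(r',c')` are adjacent iff
they are distinct and `|r - r'| = |c - c'|`, i.e. they lie on a common diagonal. -/
def bishopGraph (a b : ℕ) : SimpleGraph (Fin a × Fin b) where
  Adj p q := p ≠ q ∧
    (p.1.val + q.2.val = q.1.val + p.2.val ∨ p.1.val + p.2.val = q.1.val + q.2.val)
  symm := by
    constructor
    rintro p q ⟨h1, h2⟩
    exact ⟨h1.symm, by omega⟩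
  loopless := by
    constructor
    rintro p ⟨h1, -⟩
    exact h1 rfl

/-- The light squares: `r + c` even. -/
def lightSquares (a b : ℕ) : Set (Fin a × Fin b) := {p | (p.1.val + p.2.val) % 2 = 0}

/-- The dark squares: `r + c` odd. -/
def darkSquares (a b : ℕ) : Set (Fin a × Fin b) := {p | (p.1.val + p.2.val) % 2 = 1}

/-- `B_L(a,b)`: the component of the bishop graph induced on the light squares. -/
def BL (a b : ℕ) : SimpleGraph (lightSquares a b) :=
  (bishopGraph a b).induce (lightSquares a b)

/-- `B_D(a,b)`: the component of the bishop graph induced on the dark squares. -/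
def BD (a b : ℕ) : SimpleGraph (darkSquares a b) :=
  (bishopGraph a b).induce (darkSquares a b)

/-- `S` resolves the (connected) simple graph `G`: distinct vertices have distinct
vectors of distances to the vertices of `S`. -/
def GResolves {V : Type*} (G : SimpleGraph V) (S : Set V) : Prop :=
  ∀ u v : V, (∀ s ∈ S, G.dist s u = G.dist s v) → u = v

/-- Metric dimension of a simple graph. -/
noncomputable def gMetricDim {V : Type*} (G : SimpleGraph V) : ℕ :=
  sInf {k : ℕ | ∃ S : Finset V, S.card = k ∧ GResolves G ↑S}

/-- `S` doubly resolves `G`: for distinct `u, v` there are `s₁, s₂ ∈ S` with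
`d(s₁,u) − d(s₂,u) ≠ d(s₁,v) − d(s₂,v)`. -/
def DoublyResolves {V : Type*} (G : SimpleGraph V) (S : Set V) : Prop :=
  ∀ u v : V, u ≠ v → ∃ s₁ ∈ S, ∃ s₂ ∈ S,
    (G.dist s₁ u : ℤ) - (G.dist s₂ u : ℤ) ≠ (G.dist s₁ v : ℤ) - (G.dist s₂ v : ℤ)


namespace Stmt11Aux

variable {n : ℕ}

/-- distance-ish on ℕ -/
def D (x y : ℕ) : ℕ := (x - y) + (y - x)

abbrev V (n : ℕ) := ↥(lightSquares 2 n) × ↥(darkSquares 2 n)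

def col1 (x : V n) : ℕ := x.1.val.2.val
def col2 (x : V n) : ℕ := x.2.val.2.val

lemma col1_lt (x : V n) : col1 x < n := x.1.val.2.isLt
lemma col2_lt (x : V n) : col2 x < n := x.2.val.2.isLt

lemma light_mem (u : ↥(lightSquares 2 n)) : (u.val.1.val + u.val.2.val) % 2 = 0 := u.property
lemma dark_mem (u : ↥(darkSquares 2 n)) : (u.val.1.val + u.val.2.val) % 2 = 1 := u.property

lemma light_ext {u v : ↥(lightSquares 2 n)} (h : u.val.2.val = v.val.2.val) : u = v := by
  have hu := light_mem u; have hv := light_mem v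
  have h1 : u.val.1.val < 2 := u.val.1.isLt
  have h2 : v.val.1.val < 2 := v.val.1.isLt
  have : u.val.1.val = v.val.1.val := by omega
  exact Subtype.ext (Prod.ext (Fin.ext this) (Fin.ext h))

lemma dark_ext {u v : ↥(darkSquares 2 n)} (h : u.val.2.val = v.val.2.val) : u = v := by
  have hu := dark_mem u; have hv := dark_mem v
  have h1 : u.val.1.val < 2 := u.val.1.isLt
  have h2 : v.val.1.val < 2 := v.val.1.isLt
  have : u.val.1.val = v.val.1.val := by omega
  exact Subtype.ext (Prod.ext (Fin.ext this) (Fin.ext h))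

lemma BL_adj_iff {u v : ↥(lightSquares 2 n)} :
    (BL 2 n).Adj u v ↔ (u.val.2.val = v.val.2.val + 1 ∨ v.val.2.val = u.val.2.val + 1) := by
  have hu := light_mem u; have hv := light_mem v
  have h1 : u.val.1.val < 2 := u.val.1.isLt
  have h2 : v.val.1.val < 2 := v.val.1.isLt
  show (bishopGraph 2 n).Adj u.val v.val ↔ _
  show (u.val ≠ v.val ∧ _) ↔ _
  constructor
  · rintro ⟨hne, hdiag⟩
    have hne' : ¬(u.val.1.val = v.val.1.val ∧ u.val.2.val = v.val.2.val) := by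
      rintro ⟨ha, hb⟩; exact hne (Prod.ext (Fin.ext ha) (Fin.ext hb))
    omega
  · intro h
    refine ⟨?_, by omega⟩
    intro heq
    have : u.val.2.val = v.val.2.val := by rw [heq]
    omega

lemma BD_adj_iff {u v : ↥(darkSquares 2 n)} :
    (BD 2 n).Adj u v ↔ (u.val.2.val = v.val.2.val + 1 ∨ v.val.2.val = u.val.2.val + 1) := by
  have hu := dark_mem u; have hv := dark_mem v
  have h1 : u.val.1.val < 2 := u.val.1.isLt
  have h2 : v.val.1.val < 2 := v.val.1.isLt
  show (bishopGraph 2 n).Adj u.val v.val ↔ _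
  show (u.val ≠ v.val ∧ _) ↔ _
  constructor
  · rintro ⟨hne, hdiag⟩
    have hne' : ¬(u.val.1.val = v.val.1.val ∧ u.val.2.val = v.val.2.val) := by
      rintro ⟨ha, hb⟩; exact hne (Prod.ext (Fin.ext ha) (Fin.ext hb))
    omega
  · intro h
    refine ⟨?_, by omega⟩
    intro heq
    have : u.val.2.val = v.val.2.val := by rw [heq]
    omega

end Stmt11Aux

namespace Stmt11Aux

variable {n : ℕ}

def lsq (n : ℕ) (c : ℕ) (hc : c < n) : ↥(lightSquares 2 n) :=
  ⟨(⟨c % 2, by omega⟩, ⟨c, hc⟩), by show (c % 2 + c) % 2 = 0; omega⟩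

def dsq (n : ℕ) (c : ℕ) (hc : c < n) : ↥(darkSquares 2 n) :=
  ⟨(⟨(c + 1) % 2, by omega⟩, ⟨c, hc⟩), by show ((c + 1) % 2 + c) % 2 = 1; omega⟩

@[simp] lemma lsq_col (c : ℕ) (hc : c < n) : (lsq n c hc).val.2.val = c := rfl
@[simp] lemma dsq_col (c : ℕ) (hc : c < n) : (dsq n c hc).val.2.val = c := rfl

lemma adj_char {x y : V n} (h : ((BL 2 n).boxProd (BD 2 n)).Adj x y) :
    D (col1 x) (col1 y) + D (col2 x) (col2 y) = 1 := by
  rcases (SimpleGraph.boxProd_adj).1 h with ⟨h1, h2⟩ | ⟨h1, h2⟩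
  · have := BL_adj_iff.1 h1
    have hc : col2 x = col2 y := congrArg (fun (s : ↥(darkSquares 2 n)) => s.val.2.val) h2
    simp only [D, col1, col2] at *; omega
  · have := BD_adj_iff.1 h1
    have hc : col1 x = col1 y := congrArg (fun (s : ↥(lightSquares 2 n)) => s.val.2.val) h2
    simp only [D, col1, col2] at *; omega

lemma walk_lb {x y : V n} (w : ((BL 2 n).boxProd (BD 2 n)).Walk x y) :
    D (col1 x) (col1 y) + D (col2 x) (col2 y) ≤ w.length := by
  induction w with
  | nil => simp [D]
  | cons h p ih =>
    have := adj_char h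
    rw [SimpleGraph.Walk.length_cons]
    simp only [D] at *
    omega

lemma walk_light : ∀ (k : ℕ) (x y : V n), x.2 = y.2 → D (col1 x) (col1 y) = k →
    ∃ w : ((BL 2 n).boxProd (BD 2 n)).Walk x y, w.length = k := by
  intro k
  induction k with
  | zero =>
    intro x y h2 hD
    have : col1 x = col1 y := by simp only [D] at hD; omega
    have h1 : x.1 = y.1 := light_ext this
    have : x = y := Prod.ext h1 h2
    subst this
    exact ⟨SimpleGraph.Walk.nil, rfl⟩
  | succ k ih =>
    intro x y h2 hD
    have hbn : col1 y < n := col1_lt y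
    have han : col1 x < n := col1_lt x
    obtain ⟨c, hcn, hstep, hdk⟩ :
        ∃ c, c < n ∧ (col1 x = c + 1 ∨ c = col1 x + 1) ∧ D c (col1 y) = k := by
      simp only [D] at hD ⊢
      rcases Nat.lt_or_ge (col1 x) (col1 y) with h | h
      · exact ⟨col1 x + 1, by omega, by omega, by omega⟩
      · exact ⟨col1 x - 1, by omega, by omega, by omega⟩
    refine ⟨SimpleGraph.Walk.cons (v := (lsq n c hcn, x.2)) ?_ ?_, ?_⟩
    · apply SimpleGraph.boxProd_adj.2
      left
      exact ⟨BL_adj_iff.2 (by simpa [col1] using hstep), rfl⟩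
    · exact (ih (lsq n c hcn, x.2) y h2 hdk).choose
    · simp [SimpleGraph.Walk.length_cons,
        (ih (lsq n c hcn, x.2) y h2 hdk).choose_spec]

lemma walk_dark : ∀ (k : ℕ) (x y : V n), x.1 = y.1 → D (col2 x) (col2 y) = k →
    ∃ w : ((BL 2 n).boxProd (BD 2 n)).Walk x y, w.length = k := by
  intro k
  induction k with
  | zero =>
    intro x y h1 hD
    have : col2 x = col2 y := by simp only [D] at hD; omega
    have h2 : x.2 = y.2 := dark_ext this
    have : x = y := Prod.ext h1 h2
    subst this
    exact ⟨SimpleGraph.Walk.nil, rfl⟩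
  | succ k ih =>
    intro x y h1 hD
    have hbn : col2 y < n := col2_lt y
    have han : col2 x < n := col2_lt x
    obtain ⟨c, hcn, hstep, hdk⟩ :
        ∃ c, c < n ∧ (col2 x = c + 1 ∨ c = col2 x + 1) ∧ D c (col2 y) = k := by
      simp only [D] at hD ⊢
      rcases Nat.lt_or_ge (col2 x) (col2 y) with h | h
      · exact ⟨col2 x + 1, by omega, by omega, by omega⟩
      · exact ⟨col2 x - 1, by omega, by omega, by omega⟩
    refine ⟨SimpleGraph.Walk.cons (v := (x.1, dsq n c hcn)) ?_ ?_, ?_⟩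
    · apply SimpleGraph.boxProd_adj.2
      right
      exact ⟨BD_adj_iff.2 (by simpa [col2] using hstep), rfl⟩
    · exact (ih (x.1, dsq n c hcn) y h1 hdk).choose
    · simp [SimpleGraph.Walk.length_cons,
        (ih (x.1, dsq n c hcn) y h1 hdk).choose_spec]

lemma exists_walk (x y : V n) :
    ∃ w : ((BL 2 n).boxProd (BD 2 n)).Walk x y,
      w.length = D (col1 x) (col1 y) + D (col2 x) (col2 y) := by
  set z : V n := (y.1, x.2) with hz
  obtain ⟨w1, hw1⟩ := walk_light (D (col1 x) (col1 y)) x z rfl rfl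
  obtain ⟨w2, hw2⟩ := walk_dark (D (col2 x) (col2 y)) z y rfl rfl
  exact ⟨w1.append w2, by simp [hw1, hw2]⟩

lemma dist_eq (x y : V n) :
    ((BL 2 n).boxProd (BD 2 n)).dist x y = D (col1 x) (col1 y) + D (col2 x) (col2 y) := by
  obtain ⟨w, hw⟩ := exists_walk x y
  refine le_antisymm (hw ▸ SimpleGraph.dist_le w) ?_
  obtain ⟨w', hw'⟩ := SimpleGraph.Reachable.exists_walk_length_eq_dist ⟨w⟩
  exact hw' ▸ walk_lb w'

end Stmt11Aux

namespace Stmt11Aux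

theorem main (n : ℕ) (hn : 2 ≤ n) :
    gMetricDim ((BL 2 n).boxProd (BD 2 n)) = 2 := by
  classical
  set K : Set ℕ :=
    {k : ℕ | ∃ S : Finset (V n), S.card = k ∧ GResolves ((BL 2 n).boxProd (BD 2 n)) ↑S} with hK
  have h0n : (0 : ℕ) < n := by omega
  have hn1 : n - 1 < n := by omega
  set s1 : V n := (lsq n 0 h0n, dsq n 0 h0n) with hs1
  set s2 : V n := (lsq n (n - 1) hn1, dsq n 0 h0n) with hs2
  have hc1s1 : col1 s1 = 0 := rfl
  have hc2s1 : col2 s1 = 0 := rfl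
  have hc1s2 : col1 s2 = n - 1 := rfl
  have hc2s2 : col2 s2 = 0 := rfl
  have hne : s1 ≠ s2 := by
    intro h
    have := congrArg col1 h
    rw [hc1s1, hc1s2] at this
    omega
  have h2K : 2 ∈ K := by
    refine ⟨{s1, s2}, Finset.card_pair hne, ?_⟩
    intro u v h
    have h1 := h s1 (by simp)
    have h2 := h s2 (by simp)
    rw [dist_eq, dist_eq] at h1 h2
    rw [hc1s1, hc2s1] at h1
    rw [hc1s2, hc2s2] at h2
    have b1 := col1_lt u; have b2 := col2_lt u
    have b3 := col1_lt v; have b4 := col2_lt v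
    simp only [D] at h1 h2
    have e1 : col1 u = col1 v := by omega
    have e2 : col2 u = col2 v := by omega
    exact Prod.ext (light_ext e1) (dark_ext e2)
  have hKne : K.Nonempty := ⟨2, h2K⟩
  have hmem := Nat.sInf_mem hKne
  have hle : sInf K ≤ 2 := Nat.sInf_le h2K
  obtain ⟨S, hScard, hres⟩ := hmem
  have hge : 2 ≤ sInf K := by
    by_contra hlt
    push_neg at hlt
    interval_cases h : sInf K
    · obtain rfl := Finset.card_eq_zero.1 hScard
      exact hne (hres s1 s2 (fun s hs => by simp at hs))
    · obtain ⟨s, rfl⟩ := Finset.card_eq_one.1 hScard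
      have han := col1_lt (n := n) s
      have hbn := col2_lt (n := n) s
      obtain ⟨a', ha'n, ha'ne, hDa⟩ :
          ∃ a', a' < n ∧ a' ≠ col1 s ∧ D (col1 s) a' = 1 := by
        simp only [D]
        rcases Nat.eq_zero_or_pos (col1 s) with e | e
        · exact ⟨1, by omega, by omega, by omega⟩
        · exact ⟨col1 s - 1, by omega, by omega, by omega⟩
      obtain ⟨b', hb'n, hb'ne, hDb⟩ :
          ∃ b', b' < n ∧ b' ≠ col2 s ∧ D (col2 s) b' = 1 := by
        simp only [D]
        rcases Nat.eq_zero_or_pos (col2 s) with e | e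
        · exact ⟨1, by omega, by omega, by omega⟩
        · exact ⟨col2 s - 1, by omega, by omega, by omega⟩
      set u : V n := (lsq n a' ha'n, s.2) with hu
      set v : V n := (s.1, dsq n b' hb'n) with hv
      have huv : u ≠ v := by
        intro h
        have := congrArg col1 h
        have hcu : col1 u = a' := rfl
        have hcv : col1 v = col1 s := rfl
        rw [hcu, hcv] at this
        exact ha'ne this
      apply huv
      apply hres
      intro t ht
      have : t = s := by simpa using ht
      subst this
      rw [dist_eq, dist_eq]
      have e1 : col1 u = a' := rfl
      have e2 : col2 u = col2 t := rfl
      have e3 : col1 v = col1 t := rfl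
      have e4 : col2 v = b' := rfl
      rw [e1, e2, e3, e4]
      simp only [D] at *
      omega
  unfold gMetricDim
  rw [← hK]
  omega

end Stmt11Aux


/-- for every `n ≥ 2`, the two-bishop game graph on the `2 × n` board,
`B_L(2,n) □ B_D(2,n)`, has metric dimension 2. -/
theorem stmt11 (n : ℕ) (hn : 2 ≤ n) :
    gMetricDim ((BL 2 n).boxProd (BD 2 n)) = 2 := by
  exact Stmt11Aux.main n hn
end
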